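/- arXiv:2510.04727 — 8 statements merged into one kernel-verified Lean document; each statement's English description precedes it below -/
import Mathlib

section
/- For every signal x ∈ ℂ^{nd}, the Dirichlet energy induced by the Normalized Directed Sheaf Hypergraph Laplacian satisfies x† L_N x = (1/2) Σ_{e∈E} (1/δ_e) Σ_{u,v∈e, u≠v} ‖ F⃗_{u⊴e} D_u^{−1/2} x_u − F⃗_{v⊴e} D_v^{−1/2} x_v ‖₂², where x_u ∈ ℂ^d denotes the block of x indexed by vertex u; in particular x† L_N x is a nonnegative real number. -/
open Matrix Complex Finset
open scoped ComplexOrder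

noncomputable section

variable {V E : Type*} [Fintype V] [DecidableEq V] [Fintype E] [DecidableEq E] {d : ℕ}

/-- The vertex set of a hyperedge `e`: the union of its tail set `T e` and head set `Hd e`. -/
def everts (T Hd : E → Finset V) (e : E) : Finset V := T e ∪ Hd e

/-- The degree `δ_e` of a hyperedge. -/
def edeg (T Hd : E → Finset V) (e : E) : ℕ := (everts T Hd e).card

/-- The directional scalar `S^{(q)}_{u ⊴ e}`. -/
def dirS (T Hd : E → Finset V) (q : ℝ) (e : E) (u : V) : ℂ :=
  if u ∈ Hd e then 1
  else if u ∈ T e then Complex.exp (-(2 * Real.pi * q) * Complex.I)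
  else 0

/-- The complex restriction map `F⃗_{u ⊴ e} = S^{(q)}_{u ⊴ e} • F_{u ⊴ e}`. -/
def Fdir (T Hd : E → Finset V) (q : ℝ) (F : V → E → Matrix (Fin d) (Fin d) ℝ)
    (u : V) (e : E) : Matrix (Fin d) (Fin d) ℂ :=
  dirS T Hd q e u • (F u e).map (fun a => (a : ℂ))

/-- The block incidence matrix `B^{(q)} ∈ ℂ^{md × nd}`. -/
def Bmat (T Hd : E → Finset V) (q : ℝ) (F : V → E → Matrix (Fin d) (Fin d) ℝ) :
    Matrix (E × Fin d) (V × Fin d) ℂ :=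
  Matrix.of fun p r =>
    if r.1 ∈ everts T Hd p.1 then Fdir T Hd q F r.1 p.1 p.2 r.2 else 0

/-- The block diagonal matrix `D_E^{-1}`, with blocks `δ_e⁻¹ • I_d`. -/
def DEinv (T Hd : E → Finset V) (d : ℕ) : Matrix (E × Fin d) (E × Fin d) ℂ :=
  Matrix.diagonal fun p => ((edeg T Hd p.1 : ℂ))⁻¹

/-- The node degree block `D_u = Σ_{e : u ∈ e} F_{u⊴e}ᵀ F_{u⊴e}`. -/
def Dblk (T Hd : E → Finset V) (F : V → E → Matrix (Fin d) (Fin d) ℝ) (u : V) :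
    Matrix (Fin d) (Fin d) ℝ :=
  ∑ e ∈ Finset.univ.filter (fun e => u ∈ everts T Hd e), (F u e)ᵀ * F u e

/-- The block diagonal node degree matrix `D_V ∈ ℝ^{nd×nd}` (viewed as a complex matrix). -/
def DVmat (T Hd : E → Finset V) (F : V → E → Matrix (Fin d) (Fin d) ℝ) :
    Matrix (V × Fin d) (V × Fin d) ℂ :=
  Matrix.of fun p r => if p.1 = r.1 then ((Dblk T Hd F p.1 p.2 r.2 : ℝ) : ℂ) else 0

/-- The Directed Sheaf Hypergraph Laplacian `L = D_V − B^{(q)†} D_E^{-1} B^{(q)}`. -/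
def Lap (T Hd : E → Finset V) (q : ℝ) (F : V → E → Matrix (Fin d) (Fin d) ℝ) :
    Matrix (V × Fin d) (V × Fin d) ℂ :=
  DVmat T Hd F - (Bmat T Hd q F)ᴴ * DEinv T Hd d * Bmat T Hd q F

/-- The block diagonal matrix with blocks `(R u)⁻¹`; when `R u` is the positive square root
of `D_u`, this is `D_V^{-1/2}`. -/
def Pinv (R : V → Matrix (Fin d) (Fin d) ℂ) : Matrix (V × Fin d) (V × Fin d) ℂ :=
  Matrix.of fun p r => if p.1 = r.1 then (R p.1)⁻¹ p.2 r.2 else 0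

/-- The Normalized Directed Sheaf Hypergraph Laplacian `L_N = D_V^{-1/2} L D_V^{-1/2}`. -/
def LapN (T Hd : E → Finset V) (q : ℝ) (F : V → E → Matrix (Fin d) (Fin d) ℝ)
    (R : V → Matrix (Fin d) (Fin d) ℂ) : Matrix (V × Fin d) (V × Fin d) ℂ :=
  Pinv R * Lap T Hd q F * Pinv R


private lemma sumA {ι : Type*} [DecidableEq ι] (s : Finset ι) (a : ι → ℂ) :
    ∑ u ∈ s, ∑ v ∈ s.erase u, Complex.normSq (a u - a v) =
      2 * s.card * ∑ u ∈ s, Complex.normSq (a u) - 2 * Complex.normSq (∑ u ∈ s, a u) := by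
  have h1 : ∀ u ∈ s, ∑ v ∈ s.erase u, Complex.normSq (a u - a v)
      = ∑ v ∈ s, Complex.normSq (a u - a v) := fun u _ => Finset.sum_erase s (by simp)
  rw [Finset.sum_congr rfl h1]
  have cross : (∑ u ∈ s, ∑ v ∈ s, (a u * (starRingEnd ℂ) (a v)).re)
      = Complex.normSq (∑ u ∈ s, a u) := by
    have h2 : ∑ u ∈ s, ∑ v ∈ s, a u * (starRingEnd ℂ) (a v)
        = (∑ u ∈ s, a u) * (starRingEnd ℂ) (∑ v ∈ s, a v) := by
      rw [map_sum, Finset.sum_mul_sum]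
    calc ∑ u ∈ s, ∑ v ∈ s, (a u * (starRingEnd ℂ) (a v)).re
        = (∑ u ∈ s, ∑ v ∈ s, a u * (starRingEnd ℂ) (a v)).re := by
          rw [Complex.re_sum]
          exact Finset.sum_congr rfl fun u _ => (Complex.re_sum _ _).symm
      _ = Complex.normSq (∑ u ∈ s, a u) := by
          rw [h2, Complex.mul_conj, Complex.ofReal_re]
  simp only [Complex.normSq_sub, Finset.sum_sub_distrib, Finset.sum_add_distrib,
    Finset.sum_const, nsmul_eq_mul, ← Finset.mul_sum]
  rw [cross]
  ring

private lemma normSq_dirS (T Hd : E → Finset V) (q : ℝ) (e : E) (u : V)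
    (hu : u ∈ everts T Hd e) : Complex.normSq (dirS T Hd q e u) = 1 := by
  by_cases h2 : u ∈ Hd e
  · simp [dirS, h2]
  · rcases Finset.mem_union.1 hu with h | h
    · simp only [dirS, if_neg h2, if_pos h]
      rw [Complex.normSq_eq_norm_sq]
      have h3 : (-(2 * Real.pi * q) * Complex.I : ℂ)
          = ((-(2 * Real.pi * q) : ℝ) : ℂ) * Complex.I := by push_cast; ring
      rw [h3, Complex.norm_exp_ofReal_mul_I]
      norm_num
    · exact absurd h h2


/-- Dirichlet energy of the Normalized Directed Sheaf Hypergraph Laplacian: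
`x† L_N x = (1/2) Σ_{e} (1/δ_e) Σ_{u,v ∈ e, u ≠ v} ‖F⃗_{u⊴e} D_u^{-1/2} x_u − F⃗_{v⊴e} D_v^{-1/2} x_v‖²`,
and in particular `x† L_N x` is a nonnegative real number. -/
theorem normalized_directed_sheaf_laplacian_dirichlet_energy
    (T Hd : E → Finset V) (q : ℝ) (F : V → E → Matrix (Fin d) (Fin d) ℝ)
    (R : V → Matrix (Fin d) (Fin d) ℂ)
    (hd : 0 < d)
    (hdisj : ∀ e, Disjoint (T e) (Hd e))
    (hne : ∀ e, (everts T Hd e).Nonempty)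
    (hpos : ∀ u, (Dblk T Hd F u).PosDef)
    (hR : ∀ u, (R u).PosSemidef)
    (hRsq : ∀ u, R u * R u = (Dblk T Hd F u).map (fun a => (a : ℂ))) :
    (∀ x : V × Fin d → ℂ,
      star x ⬝ᵥ (LapN T Hd q F R *ᵥ x) =
        ((((1 : ℝ) / 2) * ∑ e : E, ((edeg T Hd e : ℝ))⁻¹ *
          ∑ u ∈ everts T Hd e, ∑ v ∈ (everts T Hd e).erase u,
            ∑ i : Fin d, Complex.normSq
              ((Fdir T Hd q F u e *ᵥ ((R u)⁻¹ *ᵥ fun k => x (u, k))) i -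
               (Fdir T Hd q F v e *ᵥ ((R v)⁻¹ *ᵥ fun k => x (v, k))) i) : ℝ) : ℂ)) ∧
    (∀ x : V × Fin d → ℂ,
      0 ≤ (star x ⬝ᵥ (LapN T Hd q F R *ᵥ x)).re ∧
        (star x ⬝ᵥ (LapN T Hd q F R *ᵥ x)).im = 0) := by
  classical
  have hmain : ∀ x : V × Fin d → ℂ,
      star x ⬝ᵥ (LapN T Hd q F R *ᵥ x) =
        ((((1 : ℝ) / 2) * ∑ e : E, ((edeg T Hd e : ℝ))⁻¹ *
          ∑ u ∈ everts T Hd e, ∑ v ∈ (everts T Hd e).erase u,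
            ∑ i : Fin d, Complex.normSq
              ((Fdir T Hd q F u e *ᵥ ((R u)⁻¹ *ᵥ fun k => x (u, k))) i -
               (Fdir T Hd q F v e *ᵥ ((R v)⁻¹ *ᵥ fun k => x (v, k))) i) : ℝ) : ℂ) := by
    intro x
    set y : V → Fin d → ℂ := fun u => (R u)⁻¹ *ᵥ fun k => x (u, k) with hy
    set z : E → V → Fin d → ℂ := fun e u => Fdir T Hd q F u e *ᵥ y u with hz
    set y' : V × Fin d → ℂ := fun p => y p.1 p.2 with hy'
    set g : V → E → Fin d → ℂ := fun u e => ((F u e).map (fun a => (a : ℂ))) *ᵥ y u with hg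
    have hPH : (Pinv R)ᴴ = Pinv R := by
      ext ⟨u, k⟩ ⟨v, j⟩
      simp only [Pinv, Matrix.conjTranspose_apply, Matrix.of_apply]
      by_cases h : u = v
      · subst h
        simp only [if_pos rfl]
        exact ((hR u).1.inv).apply k j
      · simp [h, Ne.symm h]
    have hPx : Pinv R *ᵥ x = y' := by
      funext p
      obtain ⟨u, k⟩ := p
      simp only [Pinv, Matrix.mulVec, dotProduct, Matrix.of_apply,
        Fintype.sum_prod_type, ite_mul, zero_mul]
      rw [Finset.sum_comm]
      simp [hy', hy, Matrix.mulVec, dotProduct, Finset.sum_ite_eq]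
    have hE1 : star x ⬝ᵥ (LapN T Hd q F R *ᵥ x) = star y' ⬝ᵥ (Lap T Hd q F *ᵥ y') := by
      have h1 : LapN T Hd q F R *ᵥ x = Pinv R *ᵥ (Lap T Hd q F *ᵥ (Pinv R *ᵥ x)) := by
        simp [LapN, Matrix.mulVec_mulVec, Matrix.mul_assoc]
      have h2 : star x ᵥ* Pinv R = star y' := by
        rw [← hPx, Matrix.star_mulVec, hPH]
      rw [h1, hPx, Matrix.dotProduct_mulVec, h2]
    have hsplit : star y' ⬝ᵥ (Lap T Hd q F *ᵥ y')
        = star y' ⬝ᵥ (DVmat T Hd F *ᵥ y')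
          - star y' ⬝ᵥ (((Bmat T Hd q F)ᴴ * DEinv T Hd d * Bmat T Hd q F) *ᵥ y') := by
      rw [Lap, Matrix.sub_mulVec, dotProduct_sub]
    have hquad : ∀ (A : Matrix (Fin d) (Fin d) ℂ) (v : Fin d → ℂ),
        star v ⬝ᵥ ((Aᴴ * A) *ᵥ v) = ∑ i, (Complex.normSq ((A *ᵥ v) i) : ℂ) := by
      intro A v
      rw [← Matrix.mulVec_mulVec, Matrix.dotProduct_mulVec, ← Matrix.star_mulVec]
      simp [dotProduct, Complex.star_def, Complex.normSq_eq_conj_mul_self]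
    have hsumMV : ∀ (s : Finset E) (M : E → Matrix (Fin d) (Fin d) ℂ) (v : Fin d → ℂ),
        (∑ e ∈ s, M e) *ᵥ v = ∑ e ∈ s, M e *ᵥ v := by
      intro s M v
      induction s using Finset.cons_induction with
      | empty => simp [Matrix.zero_mulVec]
      | cons a s ha ih => rw [Finset.sum_cons, Finset.sum_cons, Matrix.add_mulVec, ih]
    have hdotsum : ∀ (s : Finset E) (v : Fin d → ℂ) (f : E → Fin d → ℂ),
        v ⬝ᵥ (∑ e ∈ s, f e) = ∑ e ∈ s, v ⬝ᵥ f e := by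
      intro s v f
      simp only [dotProduct, Finset.sum_apply, Finset.mul_sum]
      exact Finset.sum_comm
    have hT1a : star y' ⬝ᵥ (DVmat T Hd F *ᵥ y')
        = ∑ u : V, star (y u) ⬝ᵥ (((Dblk T Hd F u).map (fun a => (a : ℂ))) *ᵥ y u) := by
      simp only [dotProduct, Matrix.mulVec, DVmat, Matrix.of_apply,
        Fintype.sum_prod_type, Pi.star_apply, ite_mul, zero_mul, Matrix.map_apply, hy']
      refine Finset.sum_congr rfl fun u _ => Finset.sum_congr rfl fun k _ => ?_
      congr 1
      rw [Finset.sum_comm]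
      simp [Finset.sum_ite_eq]
    have hT1b : ∀ u, ((Dblk T Hd F u).map (fun a => (a : ℂ)))
        = ∑ e ∈ Finset.univ.filter (fun e => u ∈ everts T Hd e),
            ((F u e).map (fun a => (a : ℂ)))ᴴ * ((F u e).map (fun a => (a : ℂ))) := by
      intro u
      ext i j
      simp only [Dblk, Matrix.map_apply, Matrix.sum_apply, Matrix.mul_apply,
        Matrix.conjTranspose_apply, Matrix.transpose_apply, Complex.star_def,
        Complex.conj_ofReal]
      push_cast
      rfl
    have hgz : ∀ e u, u ∈ everts T Hd e → ∀ i,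
        Complex.normSq (g u e i) = Complex.normSq (z e u i) := by
      intro e u hu i
      have hzz : z e u = dirS T Hd q e u • g u e := by
        simp [hz, hg, Fdir, Matrix.smul_mulVec]
      rw [hzz]
      simp [Complex.normSq_mul, normSq_dirS T Hd q e u hu]
    have hswap : ∀ (f : V → E → ℂ),
        (∑ u : V, ∑ e ∈ Finset.univ.filter (fun e => u ∈ everts T Hd e), f u e)
          = ∑ e : E, ∑ u ∈ everts T Hd e, f u e := by
      intro f
      simp_rw [Finset.sum_filter]
      rw [Finset.sum_comm]
      refine Finset.sum_congr rfl fun e _ => ?_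
      rw [← Finset.sum_filter]
      refine Finset.sum_congr ?_ fun _ _ => rfl
      ext u; simp
    have hT1 : star y' ⬝ᵥ (DVmat T Hd F *ᵥ y')
        = ∑ e : E, ∑ u ∈ everts T Hd e, ∑ i, (Complex.normSq (z e u i) : ℂ) := by
      rw [hT1a]
      have hstep : ∀ u : V,
          star (y u) ⬝ᵥ (((Dblk T Hd F u).map (fun a => (a : ℂ))) *ᵥ y u)
          = ∑ e ∈ Finset.univ.filter (fun e => u ∈ everts T Hd e),
              ∑ i, (Complex.normSq (z e u i) : ℂ) := by
        intro u
        rw [hT1b u, hsumMV, hdotsum]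
        refine Finset.sum_congr rfl fun e he => ?_
        rw [hquad]
        refine Finset.sum_congr rfl fun i _ => ?_
        rw [hgz e u (Finset.mem_filter.1 he).2 i]
      rw [Finset.sum_congr rfl fun u _ => hstep u]
      exact hswap _
    have hBy : Bmat T Hd q F *ᵥ y'
        = fun p : E × Fin d => ∑ u ∈ everts T Hd p.1, z p.1 u p.2 := by
      funext p
      obtain ⟨e, i⟩ := p
      simp only [Matrix.mulVec, dotProduct, Bmat, Matrix.of_apply,
        Fintype.sum_prod_type, ite_mul, zero_mul, hy']
      rw [Finset.sum_comm]
      simp only [Finset.sum_ite_mem, Finset.univ_inter]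
      rw [Finset.sum_comm]
      simp [hz, Matrix.mulVec, dotProduct]
    have hDE : ∀ v : E × Fin d → ℂ,
        DEinv T Hd d *ᵥ v = fun p => ((edeg T Hd p.1 : ℂ))⁻¹ * v p := by
      intro v
      funext p
      exact Matrix.mulVec_diagonal _ _ _
    have hT2 : star y' ⬝ᵥ (((Bmat T Hd q F)ᴴ * DEinv T Hd d * Bmat T Hd q F) *ᵥ y')
        = ∑ e : E, ((edeg T Hd e : ℂ))⁻¹ *
            ∑ i, (Complex.normSq (∑ u ∈ everts T Hd e, z e u i) : ℂ) := by
      rw [← Matrix.mulVec_mulVec, ← Matrix.mulVec_mulVec, Matrix.dotProduct_mulVec,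
        ← Matrix.star_mulVec, hBy, hDE]
      simp only [dotProduct, Fintype.sum_prod_type, Pi.star_apply]
      refine Finset.sum_congr rfl fun e _ => ?_
      rw [Finset.mul_sum]
      refine Finset.sum_congr rfl fun i _ => ?_
      rw [Complex.normSq_eq_conj_mul_self]
      simp only [Complex.star_def]
      ring
    have hcardne : ∀ e : E, ((edeg T Hd e : ℝ)) ≠ 0 := fun e =>
      Nat.cast_ne_zero.2 (by simpa [edeg] using (Finset.card_pos.2 (hne e)).ne')
    have hrealeq : ∀ e : E,
        (∑ u ∈ everts T Hd e, ∑ i, Complex.normSq (z e u i))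
          - ((edeg T Hd e : ℝ))⁻¹ * ∑ i, Complex.normSq (∑ u ∈ everts T Hd e, z e u i)
        = (1 / 2 : ℝ) * (((edeg T Hd e : ℝ))⁻¹ *
            ∑ u ∈ everts T Hd e, ∑ v ∈ (everts T Hd e).erase u, ∑ i,
              Complex.normSq (z e u i - z e v i)) := by
      intro e
      have hre : (∑ u ∈ everts T Hd e, ∑ v ∈ (everts T Hd e).erase u, ∑ i,
            Complex.normSq (z e u i - z e v i))
          = ∑ i, ∑ u ∈ everts T Hd e, ∑ v ∈ (everts T Hd e).erase u,
              Complex.normSq (z e u i - z e v i) := by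
        rw [show (∑ u ∈ everts T Hd e, ∑ v ∈ (everts T Hd e).erase u, ∑ i,
            Complex.normSq (z e u i - z e v i))
          = ∑ u ∈ everts T Hd e, ∑ i, ∑ v ∈ (everts T Hd e).erase u,
              Complex.normSq (z e u i - z e v i)
          from Finset.sum_congr rfl fun u _ => Finset.sum_comm]
        exact Finset.sum_comm
      rw [hre]
      have happ : ∀ i : Fin d, (∑ u ∈ everts T Hd e, ∑ v ∈ (everts T Hd e).erase u,
            Complex.normSq (z e u i - z e v i))
          = 2 * (edeg T Hd e : ℝ) * ∑ u ∈ everts T Hd e, Complex.normSq (z e u i)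
            - 2 * Complex.normSq (∑ u ∈ everts T Hd e, z e u i) := fun i =>
        sumA (everts T Hd e) (fun u => z e u i)
      rw [Finset.sum_congr rfl fun i _ => happ i, Finset.sum_sub_distrib,
        show (∑ u ∈ everts T Hd e, ∑ i, Complex.normSq (z e u i))
          = ∑ i, ∑ u ∈ everts T Hd e, Complex.normSq (z e u i) from Finset.sum_comm]
      simp only [← Finset.mul_sum]
      field_simp [hcardne e]
    rw [hE1, hsplit, hT1, hT2, ← Finset.sum_sub_distrib]
    have hcast : ∀ e : E,
        ((∑ u ∈ everts T Hd e, ∑ i, (Complex.normSq (z e u i) : ℂ))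
          - ((edeg T Hd e : ℂ))⁻¹ *
              ∑ i, (Complex.normSq (∑ u ∈ everts T Hd e, z e u i) : ℂ))
        = ((((1 : ℝ) / 2) * (((edeg T Hd e : ℝ))⁻¹ *
            ∑ u ∈ everts T Hd e, ∑ v ∈ (everts T Hd e).erase u, ∑ i,
              Complex.normSq (z e u i - z e v i)) : ℝ) : ℂ) := by
      intro e
      rw [show ((((1 : ℝ) / 2) * (((edeg T Hd e : ℝ))⁻¹ *
            ∑ u ∈ everts T Hd e, ∑ v ∈ (everts T Hd e).erase u, ∑ i,
              Complex.normSq (z e u i - z e v i)) : ℝ) : ℂ)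
          = (((∑ u ∈ everts T Hd e, ∑ i, Complex.normSq (z e u i))
            - ((edeg T Hd e : ℝ))⁻¹ *
                ∑ i, Complex.normSq (∑ u ∈ everts T Hd e, z e u i) : ℝ) : ℂ)
        from by rw [hrealeq e]]
      push_cast
      try ring
    rw [Finset.sum_congr rfl fun e _ => hcast e, ← Complex.ofReal_sum]
    congr 1
    rw [Finset.mul_sum]
  refine ⟨hmain, fun x => ?_⟩
  rw [hmain x]
  constructor
  · rw [Complex.ofReal_re]
    refine mul_nonneg (by norm_num) (Finset.sum_nonneg fun e _ => ?_)
    refine mul_nonneg (inv_nonneg.2 (by positivity)) ?_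
    refine Finset.sum_nonneg fun u _ => Finset.sum_nonneg fun v _ => ?_
    exact Finset.sum_nonneg fun i _ => Complex.normSq_nonneg _
  · rw [Complex.ofReal_im]

end
end

section
/- The Normalized Directed Sheaf Hypergraph Laplacian L_N is positive semidefinite, i.e., L_N is Hermitian and x† L_N x ≥ 0 for every x ∈ ℂ^{nd}. -/
open Matrix Complex Finset
open scoped ComplexOrder

noncomputable section

variable {V E : Type*} [Fintype V] [DecidableEq V] [Fintype E] [DecidableEq E] {d : ℕ}

/-!
With `y u e := F_{u⊴e} x_u`, the quadratic form of `L` splits over the hyperedges as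
`x† L x = ∑ₑ (∑_{u ∈ e} ‖y u e‖² - δₑ⁻¹ ‖∑_{u ∈ e} S_{u⊴e} y u e‖²)`,
and each summand is nonnegative by Cauchy–Schwarz because `|S_{u⊴e}| = 1`
(for `δₑ = 0` the summand is `0`). Since `D_V^{-1/2}` is Hermitian, `L_N = D_V^{-1/2} L D_V^{-1/2}`
is a congruence of `L` and stays positive semidefinite.
-/

set_option linter.unusedSectionVars false

lemma inv_card_mul_normSq_sum_le {α : Type*} (s : Finset α) (z : α → ℂ) :
    (#s : ℝ)⁻¹ * normSq (∑ u ∈ s, z u) ≤ ∑ u ∈ s, normSq (z u) := by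
  rcases s.eq_empty_or_nonempty with rfl | hs
  · simp
  rw [inv_mul_le_iff₀ (by exact_mod_cast hs.card_pos)]
  calc normSq (∑ u ∈ s, z u) = ‖∑ u ∈ s, z u‖ ^ 2 := (Complex.sq_norm _).symm
    _ ≤ (∑ u ∈ s, ‖z u‖) ^ 2 := by gcongr; exact norm_sum_le s z
    _ ≤ #s * ∑ u ∈ s, ‖z u‖ ^ 2 := sq_sum_le_card_mul_sum_sq
    _ = #s * ∑ u ∈ s, normSq (z u) := by simp only [Complex.sq_norm]

lemma star_dotProduct_self_eq_sum_normSq {n : Type*} [Fintype n] (v : n → ℂ) :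
    star v ⬝ᵥ v = ((∑ i, normSq (v i) : ℝ) : ℂ) := by
  simp only [dotProduct, Pi.star_apply, ofReal_sum, normSq_eq_conj_mul_self]
  rfl

lemma dotProduct_blockDiagonal_swap_mulVec {n α : Type*} [Fintype n] [DecidableEq n]
    [CommSemiring α] (M : V → Matrix n n α) (y z : V × n → α) :
    y ⬝ᵥ ((blockDiagonal M).submatrix Prod.swap Prod.swap *ᵥ z) =
      ∑ u, (fun i => y (u, i)) ⬝ᵥ (M u *ᵥ fun i => z (u, i)) := by
  simp only [dotProduct, mulVec, submatrix_apply, blockDiagonal_apply, Prod.fst_swap,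
    Prod.snd_swap, Fintype.sum_prod_type, ite_mul, zero_mul, Finset.sum_ite_irrel,
    Finset.sum_const_zero, Finset.sum_ite_eq, Finset.mem_univ, if_true]

lemma normSq_dirS_of_mem {T Hd : E → Finset V} (q : ℝ) {e : E} {u : V}
    (h : u ∈ everts T Hd e) : normSq (dirS T Hd q e u) = 1 := by
  unfold dirS
  split_ifs with hH hT
  · simp
  · rw [← Complex.sq_norm, ← ofReal_ofNat, ← ofReal_mul, ← ofReal_mul, ← ofReal_neg,
      norm_exp_ofReal_mul_I]
    norm_num
  · exact absurd h (by simp [everts, hH, hT])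

lemma star_dotProduct_conjTranspose_mul_self_mulVec {m n α : Type*} [Fintype m] [Fintype n]
    [CommSemiring α] [StarRing α] (A : Matrix m n α) (v : n → α) :
    star v ⬝ᵥ ((Aᴴ * A) *ᵥ v) = star (A *ᵥ v) ⬝ᵥ (A *ᵥ v) := by
  rw [← mulVec_mulVec, dotProduct_mulVec, star_mulVec]

section Laplacian

variable (T Hd : E → Finset V) (q : ℝ) (F : V → E → Matrix (Fin d) (Fin d) ℝ)

def edgeRestrict (x : V × Fin d → ℂ) (u : V) (e : E) : Fin d → ℂ :=
  (F u e).map (↑) *ᵥ fun j => x (u, j)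

lemma DVmat_eq_blockDiagonal :
    DVmat T Hd F =
      (blockDiagonal fun u => (Dblk T Hd F u).map (↑)).submatrix Prod.swap Prod.swap := by
  ext p r
  simp [DVmat, blockDiagonal_apply]

lemma Pinv_eq_blockDiagonal (R : V → Matrix (Fin d) (Fin d) ℂ) :
    Pinv R = (blockDiagonal fun u => (R u)⁻¹).submatrix Prod.swap Prod.swap := by
  ext p r
  simp [Pinv, blockDiagonal_apply]

lemma Dblk_map_ofReal (u : V) :
    (Dblk T Hd F u).map (↑) = ∑ e with u ∈ everts T Hd e,
      ((F u e).map (↑) : Matrix (Fin d) (Fin d) ℂ)ᴴ * (F u e).map (↑) := by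
  ext i j
  simp [Dblk, Matrix.sum_apply, mul_apply]

lemma DVmat_isHermitian : (DVmat T Hd F).IsHermitian := by
  rw [DVmat_eq_blockDiagonal]
  refine (isHermitian_blockDiagonal_iff.mpr fun u => ?_).submatrix _
  rw [Dblk_map_ofReal]
  exact (posSemidef_sum _ fun e _ => posSemidef_conjTranspose_mul_self _).isHermitian

lemma Pinv_isHermitian {R : V → Matrix (Fin d) (Fin d) ℂ} (hR : ∀ u, (R u).IsHermitian) :
    (Pinv R).IsHermitian := by
  rw [Pinv_eq_blockDiagonal]
  exact (isHermitian_blockDiagonal_iff.mpr fun u => (hR u).inv).submatrix _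

lemma DEinv_isHermitian : (DEinv T Hd d).IsHermitian :=
  isHermitian_diagonal_of_self_adjoint _ (by ext; simp)

lemma star_dotProduct_DVmat_mulVec (x : V × Fin d → ℂ) :
    star x ⬝ᵥ (DVmat T Hd F *ᵥ x) =
      ((∑ e, ∑ u ∈ everts T Hd e, ∑ i, normSq (edgeRestrict F x u e i) : ℝ) : ℂ) := by
  calc star x ⬝ᵥ (DVmat T Hd F *ᵥ x)
      = ∑ u, star (fun i => x (u, i)) ⬝ᵥ
          ((Dblk T Hd F u).map (↑) *ᵥ fun i => x (u, i)) := by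
        rw [DVmat_eq_blockDiagonal, dotProduct_blockDiagonal_swap_mulVec]; rfl
    _ = ∑ u, ∑ e with u ∈ everts T Hd e,
          star (edgeRestrict F x u e) ⬝ᵥ edgeRestrict F x u e := by
        simp only [Dblk_map_ofReal, sum_mulVec, dotProduct_sum,
          star_dotProduct_conjTranspose_mul_self_mulVec, edgeRestrict]
    _ = ∑ e, ∑ u ∈ everts T Hd e, star (edgeRestrict F x u e) ⬝ᵥ edgeRestrict F x u e :=
        Finset.sum_comm' fun u e => by simp
    _ = _ := by simp only [star_dotProduct_self_eq_sum_normSq, ofReal_sum]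

lemma Bmat_mulVec_apply (x : V × Fin d → ℂ) (e : E) (i : Fin d) :
    (Bmat T Hd q F *ᵥ x) (e, i) =
      ∑ u ∈ everts T Hd e, dirS T Hd q e u * edgeRestrict F x u e i := by
  simp only [mulVec, dotProduct, Bmat, of_apply, Fintype.sum_prod_type, ite_mul, zero_mul,
    Finset.sum_ite_irrel, Finset.sum_const_zero, Finset.sum_ite_mem, Finset.univ_inter,
    edgeRestrict, Fdir, Matrix.smul_apply, map_apply, smul_eq_mul, Finset.mul_sum, mul_assoc]

lemma star_dotProduct_incidence_mulVec (x : V × Fin d → ℂ) :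
    star x ⬝ᵥ (((Bmat T Hd q F)ᴴ * DEinv T Hd d * Bmat T Hd q F) *ᵥ x) =
      ((∑ e, (edeg T Hd e : ℝ)⁻¹ * ∑ i, normSq ((Bmat T Hd q F *ᵥ x) (e, i)) : ℝ) : ℂ) := by
  rw [← mulVec_mulVec, ← mulVec_mulVec, dotProduct_mulVec, ← star_mulVec]
  simp only [DEinv, mulVec_diagonal, dotProduct, Pi.star_apply, Fintype.sum_prod_type,
    Finset.mul_sum, ofReal_sum, ofReal_mul, normSq_eq_conj_mul_self, Complex.star_def]
  refine Finset.sum_congr rfl fun e _ => Finset.sum_congr rfl fun i _ => ?_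
  push_cast
  ring

lemma inv_edeg_mul_normSq_Bmat_mulVec_le (x : V × Fin d → ℂ) (e : E) :
    (edeg T Hd e : ℝ)⁻¹ * ∑ i, normSq ((Bmat T Hd q F *ᵥ x) (e, i)) ≤
      ∑ u ∈ everts T Hd e, ∑ i, normSq (edgeRestrict F x u e i) := by
  rw [Finset.sum_comm, Finset.mul_sum]
  refine Finset.sum_le_sum fun i _ => ?_
  rw [Bmat_mulVec_apply]
  refine (inv_card_mul_normSq_sum_le _ _).trans_eq (Finset.sum_congr rfl fun u hu => ?_)
  rw [normSq_mul, normSq_dirS_of_mem q hu, one_mul]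

lemma Lap_isHermitian : (Lap T Hd q F).IsHermitian :=
  (DVmat_isHermitian T Hd F).sub (isHermitian_conjTranspose_mul_mul _ (DEinv_isHermitian T Hd))

lemma Lap_posSemidef : (Lap T Hd q F).PosSemidef := by
  refine posSemidef_iff_dotProduct_mulVec.mpr ⟨Lap_isHermitian T Hd q F, fun x => ?_⟩
  rw [Lap, sub_mulVec, dotProduct_sub, star_dotProduct_DVmat_mulVec,
    star_dotProduct_incidence_mulVec, ← ofReal_sub, zero_le_real, sub_nonneg]
  exact Finset.sum_le_sum fun e _ => inv_edeg_mul_normSq_Bmat_mulVec_le T Hd q F x e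

end Laplacian

theorem normalized_directed_sheaf_laplacian_posSemidef_general
    (T Hd : E → Finset V) (q : ℝ) (F : V → E → Matrix (Fin d) (Fin d) ℝ)
    (R : V → Matrix (Fin d) (Fin d) ℂ)
    (hR : ∀ u, (R u).PosSemidef) :
    (LapN T Hd q F R).PosSemidef := by
  have hP : (Pinv R)ᴴ = Pinv R := Pinv_isHermitian fun u => (hR u).isHermitian
  simpa only [LapN, hP] using (Lap_posSemidef T Hd q F).conjTranspose_mul_mul_same (Pinv R)

/-- The Normalized Directed Sheaf Hypergraph Laplacian is positive semidefinite:
it is Hermitian and `x† L_N x ≥ 0` for every `x ∈ ℂ^{nd}`. -/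
theorem normalized_directed_sheaf_laplacian_posSemidef
    (T Hd : E → Finset V) (q : ℝ) (F : V → E → Matrix (Fin d) (Fin d) ℝ)
    (R : V → Matrix (Fin d) (Fin d) ℂ)
    (hd : 0 < d)
    (hdisj : ∀ e, Disjoint (T e) (Hd e))
    (hne : ∀ e, (everts T Hd e).Nonempty)
    (hpos : ∀ u, (Dblk T Hd F u).PosDef)
    (hR : ∀ u, (R u).PosSemidef)
    (hRsq : ∀ u, R u * R u = (Dblk T Hd F u).map (fun a => (a : ℂ))) :
    (LapN T Hd q F R).PosSemidef :=
  normalized_directed_sheaf_laplacian_posSemidef_general T Hd q F R hR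

end
end

section
/- For every signal x ∈ ℂ^{nd} and every vertex u ∈ V, the u-th d-dimensional block of L_N x satisfies (L_N x)_u = Σ_{e: u∈e} (1/δ_e) ( D_u^{−1/2} F⃗_{u⊴e}† ) Σ_{v∈e, v≠u} ( F⃗_{u⊴e} D_u^{−1/2} x_u − F⃗_{v⊴e} D_v^{−1/2} x_v ), where x_v ∈ ℂ^d denotes the block of x indexed by vertex v. -/
open Matrix Complex Finset
open scoped ComplexOrder

noncomputable section

variable {V E : Type*} [Fintype V] [DecidableEq V] [Fintype E] [DecidableEq E] {d : ℕ}

set_option linter.unusedSectionVars false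

-- helper: mulVec of a finset sum of vectors
lemma mulVec_sum' {ι : Type*} (A : Matrix (Fin d) (Fin d) ℂ) (s : Finset ι)
    (f : ι → Fin d → ℂ) : A *ᵥ (∑ v ∈ s, f v) = ∑ v ∈ s, A *ᵥ f v := by
  ext i
  simp only [Matrix.mulVec, dotProduct, Finset.sum_apply, Finset.mul_sum]
  rw [Finset.sum_comm]

lemma pinv_mulVec (R : V → Matrix (Fin d) (Fin d) ℂ) (z : V × Fin d → ℂ) (u : V) (i : Fin d) :
    (Pinv R *ᵥ z) (u, i) = ((R u)⁻¹ *ᵥ fun k => z (u, k)) i := by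
  classical
  simp only [Pinv, Matrix.mulVec, dotProduct, Matrix.of_apply]
  rw [Fintype.sum_prod_type]
  rw [Finset.sum_eq_single u]
  · simp
  · intro w _ hw; simp [Ne.symm hw]
  · simp

lemma dvmat_mulVec (T Hd : E → Finset V) (F : V → E → Matrix (Fin d) (Fin d) ℝ)
    (z : V × Fin d → ℂ) (u : V) (i : Fin d) :
    (DVmat T Hd F *ᵥ z) (u, i)
      = (((Dblk T Hd F u).map (fun a => (a : ℂ))) *ᵥ fun k => z (u, k)) i := by
  classical
  simp only [DVmat, Matrix.mulVec, dotProduct, Matrix.of_apply]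
  rw [Fintype.sum_prod_type]
  rw [Finset.sum_eq_single u]
  · simp [Matrix.map_apply]
  · intro w _ hw; simp [Ne.symm hw]
  · simp

set_option linter.unusedSectionVars false

lemma bmat_mulVec (T Hd : E → Finset V) (q : ℝ) (F : V → E → Matrix (Fin d) (Fin d) ℝ)
    (z : V × Fin d → ℂ) (e : E) (j : Fin d) :
    (Bmat T Hd q F *ᵥ z) (e, j)
      = (∑ v ∈ everts T Hd e, Fdir T Hd q F v e *ᵥ fun k => z (v, k)) j := by
  classical
  simp only [Bmat, Matrix.mulVec, dotProduct, Matrix.of_apply, Finset.sum_apply]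
  rw [Fintype.sum_prod_type]
  rw [← Finset.sum_filter_of_ne (s := Finset.univ)
      (p := fun v => v ∈ everts T Hd e) ?h]
  · rw [Finset.filter_univ_mem]
    refine Finset.sum_congr rfl fun v hv => ?_
    simp [hv, Matrix.mulVec, dotProduct]
  · intro v _ hv
    by_contra hmem
    simp only [hmem, if_neg] at hv
    exact hv (by simp [Finset.sum_ite_of_false, hmem])

lemma deinv_mulVec (T Hd : E → Finset V) (w : E × Fin d → ℂ) (e : E) (j : Fin d) :
    (DEinv T Hd d *ᵥ w) (e, j) = ((edeg T Hd e : ℂ))⁻¹ * w (e, j) := by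
  simp [DEinv, Matrix.mulVec_diagonal]

lemma bmatH_mulVec (T Hd : E → Finset V) (q : ℝ) (F : V → E → Matrix (Fin d) (Fin d) ℝ)
    (w : E × Fin d → ℂ) (u : V) (i : Fin d) :
    ((Bmat T Hd q F)ᴴ *ᵥ w) (u, i)
      = ∑ e ∈ Finset.univ.filter (fun e => u ∈ everts T Hd e),
          ((Fdir T Hd q F u e)ᴴ *ᵥ fun j => w (e, j)) i := by
  classical
  simp only [Matrix.mulVec, dotProduct, Matrix.conjTranspose_apply, Bmat, Matrix.of_apply]
  rw [Fintype.sum_prod_type]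
  rw [Finset.sum_filter]
  refine Finset.sum_congr rfl fun e _ => ?_
  by_cases h : u ∈ everts T Hd e <;>
    simp [h, Matrix.mulVec, dotProduct, Matrix.conjTranspose_apply]

lemma dirS_conj_mul (T Hd : E → Finset V) (q : ℝ) (e : E) (u : V)
    (hu : u ∈ everts T Hd e) :
    (starRingEnd ℂ) (dirS T Hd q e u) * dirS T Hd q e u = 1 := by
  unfold dirS
  by_cases h1 : u ∈ Hd e
  · simp [h1]
  · have h2 : u ∈ T e := by
      rcases Finset.mem_union.mp hu with h | h
      · exact h
      · exact absurd h h1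
    simp only [h1, if_false, h2, if_true]
    rw [← Complex.exp_conj, ← Complex.exp_add]
    have : (starRingEnd ℂ) (-(2 * ↑Real.pi * ↑q) * Complex.I)
        + (-(2 * ↑Real.pi * ↑q) * Complex.I) = 0 := by
      simp only [_root_.map_mul, map_neg, Complex.conj_I]
      push_cast
      simp only [Complex.conj_ofReal, map_ofNat, _root_.map_mul]
      ring_nf
    rw [this, Complex.exp_zero]

lemma fdir_conjT_mul (T Hd : E → Finset V) (q : ℝ) (F : V → E → Matrix (Fin d) (Fin d) ℝ)
    (u : V) (e : E) (hu : u ∈ everts T Hd e) :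
    (Fdir T Hd q F u e)ᴴ * Fdir T Hd q F u e
      = ((F u e)ᵀ * (F u e)).map (fun a => (a : ℂ)) := by
  have h1 := dirS_conj_mul T Hd q e u hu
  ext i j
  simp only [Matrix.mul_apply, Matrix.conjTranspose_apply, Fdir, Matrix.smul_apply,
    Matrix.map_apply, star_mul', Complex.star_def, Complex.conj_ofReal, smul_eq_mul,
    Matrix.transpose_apply]
  push_cast
  refine Finset.sum_congr rfl fun k _ => ?_
  calc (starRingEnd ℂ) (dirS T Hd q e u) * ((F u e) k i : ℂ)
        * (dirS T Hd q e u * ((F u e) k j : ℂ))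
      = ((starRingEnd ℂ) (dirS T Hd q e u) * dirS T Hd q e u)
        * (((F u e) k i : ℂ) * ((F u e) k j : ℂ)) := by ring
    _ = ((F u e) k i : ℂ) * ((F u e) k j : ℂ) := by rw [h1, one_mul]

lemma sum_fdir_conjT_mul (T Hd : E → Finset V) (q : ℝ)
    (F : V → E → Matrix (Fin d) (Fin d) ℝ) (u : V) :
    ∑ e ∈ Finset.univ.filter (fun e => u ∈ everts T Hd e),
        (Fdir T Hd q F u e)ᴴ * Fdir T Hd q F u e
      = (Dblk T Hd F u).map (fun a => (a : ℂ)) := by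
  ext i j
  simp only [Finset.sum_apply, Matrix.sum_apply, Matrix.map_apply, Dblk]
  push_cast
  refine Finset.sum_congr rfl fun e he => ?_
  have hu : u ∈ everts T Hd e := (Finset.mem_filter.mp he).2
  have := congrFun (congrFun (fdir_conjT_mul T Hd q F u e hu) i) j
  simpa [Matrix.map_apply] using this

lemma sum_mulVec' {ι : Type*} (s : Finset ι) (A : ι → Matrix (Fin d) (Fin d) ℂ)
    (v : Fin d → ℂ) : (∑ e ∈ s, A e) *ᵥ v = ∑ e ∈ s, A e *ᵥ v := by
  ext i
  simp only [Matrix.mulVec, dotProduct, Finset.sum_apply, Matrix.sum_apply, Finset.sum_mul]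
  rw [Finset.sum_comm]

/-- The Normalized Directed Sheaf Hypergraph Laplacian as a linear operator:
`(L_N x)_u = Σ_{e : u∈e} (1/δ_e) (D_u^{-1/2} F⃗_{u⊴e}†)
  Σ_{v∈e, v≠u} (F⃗_{u⊴e} D_u^{-1/2} x_u − F⃗_{v⊴e} D_v^{-1/2} x_v)`,
where `D_u^{-1/2} = (R u)⁻¹` for the positive square root `R u` of `D_u`. -/
theorem normalized_directed_sheaf_laplacian_apply
    (T Hd : E → Finset V) (q : ℝ) (F : V → E → Matrix (Fin d) (Fin d) ℝ)
    (R : V → Matrix (Fin d) (Fin d) ℂ)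
    (hd : 0 < d)
    (hdisj : ∀ e, Disjoint (T e) (Hd e))
    (hne : ∀ e, (everts T Hd e).Nonempty)
    (hpos : ∀ u, (Dblk T Hd F u).PosDef)
    (hR : ∀ u, (R u).PosSemidef)
    (hRsq : ∀ u, R u * R u = (Dblk T Hd F u).map (fun a => (a : ℂ))) :
    ∀ x : V × Fin d → ℂ, ∀ u : V, ∀ i : Fin d,
      (LapN T Hd q F R *ᵥ x) (u, i) =
        ∑ e ∈ Finset.univ.filter (fun e => u ∈ everts T Hd e),
          ((edeg T Hd e : ℂ))⁻¹ *
            (((R u)⁻¹ * (Fdir T Hd q F u e)ᴴ) *ᵥ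
              (∑ v ∈ (everts T Hd e).erase u,
                ((Fdir T Hd q F u e *ᵥ ((R u)⁻¹ *ᵥ fun k => x (u, k))) -
                 (Fdir T Hd q F v e *ᵥ ((R v)⁻¹ *ᵥ fun k => x (v, k)))))) i := by
  classical
  intro x u i
  set y : V → Fin d → ℂ := fun v => (R v)⁻¹ *ᵥ fun k => x (v, k) with hy
  have hyv : ∀ v, ((R v)⁻¹ *ᵥ fun k => x (v, k)) = y v := fun v => rfl
  simp only [hyv]
  -- abbreviations
  set filt := Finset.univ.filter (fun e => u ∈ everts T Hd e) with hfilt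
  set w : E → Fin d → ℂ := fun e => ∑ v ∈ everts T Hd e, Fdir T Hd q F v e *ᵥ y v with hw
  -- edge degree nonzero
  have hdeg : ∀ e : E, (edeg T Hd e : ℂ) ≠ 0 := fun e =>
    Nat.cast_ne_zero.mpr (Finset.card_pos.mpr (hne e)).ne'
  -- LHS
  have hPx : Pinv R *ᵥ x = fun p => y p.1 p.2 := by
    funext p
    obtain ⟨v, k⟩ := p
    exact pinv_mulVec R x v k
  have hLapApp : (fun k => (Lap T Hd q F *ᵥ fun p => y p.1 p.2) (u, k))
      = ((Dblk T Hd F u).map (fun a => (a : ℂ))) *ᵥ y u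
        - ∑ e ∈ filt, ((edeg T Hd e : ℂ))⁻¹ • ((Fdir T Hd q F u e)ᴴ *ᵥ w e) := by
    funext k
    rw [Lap, Matrix.sub_mulVec]
    simp only [Pi.sub_apply]
    rw [dvmat_mulVec]
    congr 1
    rw [← Matrix.mulVec_mulVec, ← Matrix.mulVec_mulVec, bmatH_mulVec]
    rw [Finset.sum_apply]
    refine Finset.sum_congr rfl fun e he => ?_
    have h1 : (fun j => (DEinv T Hd d *ᵥ (Bmat T Hd q F *ᵥ fun p => y p.1 p.2)) (e, j))
        = ((edeg T Hd e : ℂ))⁻¹ • w e := by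
      funext j
      rw [deinv_mulVec, bmat_mulVec]
      rfl
    rw [h1, Matrix.mulVec_smul]
  have hLHS : (LapN T Hd q F R *ᵥ x) (u, i)
      = ((R u)⁻¹ *ᵥ (((Dblk T Hd F u).map (fun a => (a : ℂ))) *ᵥ y u)) i
        - ∑ e ∈ filt, ((edeg T Hd e : ℂ))⁻¹ *
            ((R u)⁻¹ *ᵥ ((Fdir T Hd q F u e)ᴴ *ᵥ w e)) i := by
    rw [LapN, ← Matrix.mulVec_mulVec, ← Matrix.mulVec_mulVec, hPx, pinv_mulVec, hLapApp,
      Matrix.mulVec_sub]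
    rw [mulVec_sum' ((R u)⁻¹) filt]
    simp only [Pi.sub_apply, Finset.sum_apply]
    congr 1
    refine Finset.sum_congr rfl fun e he => ?_
    rw [Matrix.mulVec_smul]
    simp [smul_eq_mul]
  -- rewrite first LHS term as a sum over edges
  have hfirst : ((R u)⁻¹ *ᵥ (((Dblk T Hd F u).map (fun a => (a : ℂ))) *ᵥ y u)) i
      = ∑ e ∈ filt, ((R u)⁻¹ *ᵥ ((Fdir T Hd q F u e)ᴴ *ᵥ
          (Fdir T Hd q F u e *ᵥ y u))) i := by
    rw [← sum_fdir_conjT_mul T Hd q F u, sum_mulVec', mulVec_sum']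
    simp only [Finset.sum_apply]
    refine Finset.sum_congr rfl fun e he => ?_
    rw [← Matrix.mulVec_mulVec (y u) ((Fdir T Hd q F u e)ᴴ) (Fdir T Hd q F u e)]
  -- RHS: per-edge simplification
  have hRHS : ∀ e ∈ filt,
      ((edeg T Hd e : ℂ))⁻¹ *
        (((R u)⁻¹ * (Fdir T Hd q F u e)ᴴ) *ᵥ
          (∑ v ∈ (everts T Hd e).erase u,
            ((Fdir T Hd q F u e *ᵥ y u) - (Fdir T Hd q F v e *ᵥ y v)))) i
      = ((R u)⁻¹ *ᵥ ((Fdir T Hd q F u e)ᴴ *ᵥ (Fdir T Hd q F u e *ᵥ y u))) i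
        - ((edeg T Hd e : ℂ))⁻¹ *
            ((R u)⁻¹ *ᵥ ((Fdir T Hd q F u e)ᴴ *ᵥ w e)) i := by
    intro e he
    have hu : u ∈ everts T Hd e := (Finset.mem_filter.mp he).2
    have hsum : (∑ v ∈ (everts T Hd e).erase u,
          ((Fdir T Hd q F u e *ᵥ y u) - (Fdir T Hd q F v e *ᵥ y v)))
        = (edeg T Hd e : ℂ) • (Fdir T Hd q F u e *ᵥ y u) - w e := by
      rw [Finset.sum_sub_distrib, Finset.sum_const, Finset.card_erase_of_mem hu]
      simp only [hw]
      rw [← Finset.add_sum_erase _ _ hu]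
      obtain ⟨m, hm⟩ : ∃ m, edeg T Hd e = m + 1 :=
        ⟨edeg T Hd e - 1, (Nat.succ_pred_eq_of_pos (Finset.card_pos.mpr (hne e))).symm⟩
      rw [edeg] at hm ⊢
      rw [hm]
      rw [Nat.cast_smul_eq_nsmul]
      simp only [Nat.add_sub_cancel, succ_nsmul]
      abel
    rw [← Matrix.mulVec_mulVec, hsum, Matrix.mulVec_sub, Matrix.mulVec_smul,
      Matrix.mulVec_sub, Matrix.mulVec_smul]
    simp only [Pi.sub_apply, Pi.smul_apply, smul_eq_mul]
    field_simp [hdeg e]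
  rw [hLHS, hfirst, Finset.sum_congr rfl hRHS, Finset.sum_sub_distrib]


end
end

section
/- Suppose the hypergraph is 2-uniform and undirected, i.e., every hyperedge e satisfies H(e) = ∅ and δ_e = 2. Then, for any q ∈ ℝ, the Directed Sheaf Hypergraph Laplacian equals one half of the Hansen–Ghrist Sheaf Laplacian: L = (1/2)·L_F, where L_F ∈ ℝ^{nd×nd} is the block matrix with (L_F)_{uu} = Σ_{e: u∈e} F_{u⊴e}^⊤ F_{u⊴e} and (L_F)_{uv} = − Σ_{e: u,v∈e} F_{u⊴e}^⊤ F_{v⊴e} for u ≠ v. In particular L is real. -/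
open Matrix Complex Finset
open scoped ComplexOrder

noncomputable section

variable {V E : Type*} [Fintype V] [DecidableEq V] [Fintype E] [DecidableEq E] {d : ℕ}

lemma dirS_conj_mul_self (T Hd : E → Finset V) (q : ℝ) (e : E) (u : V)
    (hH : Hd e = ∅) (hu : u ∈ everts T Hd e) :
    (starRingEnd ℂ) (dirS T Hd q e u) * dirS T Hd q e u = 1 := by
  have hu' : u ∈ T e := by simpa [everts, hH] using hu
  simp only [dirS, hH, Finset.notMem_empty, if_false, hu', if_true]
  have hre : (-(2 * (Real.pi : ℂ) * (q : ℂ)) * Complex.I)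
      = ((-(2 * Real.pi * q) : ℝ) : ℂ) * Complex.I := by push_cast; ring
  rw [hre, ← Complex.exp_conj, ← Complex.exp_add]
  have hc : (starRingEnd ℂ) (((-(2 * Real.pi * q) : ℝ) : ℂ) * Complex.I)
      = -(((-(2 * Real.pi * q) : ℝ) : ℂ) * Complex.I) := by
    rw [RingHom.map_mul, Complex.conj_ofReal, Complex.conj_I]
    ring
  rw [hc, neg_add_cancel, Complex.exp_zero]

lemma prod_entry (T Hd : E → Finset V) (q : ℝ) (F : V → E → Matrix (Fin d) (Fin d) ℝ)
    (hH : ∀ e, Hd e = ∅) (h2 : ∀ e, edeg T Hd e = 2)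
    (u v : V) (i j : Fin d) :
    ((Bmat T Hd q F)ᴴ * DEinv T Hd d * Bmat T Hd q F) ((u, i)) ((v, j))
      = ∑ e ∈ Finset.univ.filter (fun e => u ∈ everts T Hd e ∧ v ∈ everts T Hd e),
          ((1:ℂ)/2) * (((F u e)ᵀ * F v e) i j : ℝ) := by
  have hmul : ∀ p r, ((Bmat T Hd q F)ᴴ * DEinv T Hd d) p r
      = (Bmat T Hd q F)ᴴ p r * ((edeg T Hd r.1 : ℂ))⁻¹ := by
    intro p r
    simp [DEinv, Matrix.mul_diagonal]
  rw [Matrix.mul_apply]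
  simp only [hmul, Matrix.conjTranspose_apply]
  rw [Fintype.sum_prod_type]
  rw [Finset.sum_filter]
  refine Finset.sum_congr rfl ?_
  intro e _
  by_cases huv : u ∈ everts T Hd e ∧ v ∈ everts T Hd e
  · rw [if_pos huv]
    have hconj := dirS_conj_mul_self T Hd q e u (hH e) huv.1
    simp only [Bmat, Matrix.of_apply, if_pos huv.1, if_pos huv.2, Fdir,
      Matrix.smul_apply, Matrix.map_apply, smul_eq_mul, h2 e]
    have hv' : v ∈ T e := by simpa [everts, hH e] using huv.2
    have hvS : dirS T Hd q e v = dirS T Hd q e u := by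
      have hu' : u ∈ T e := by simpa [everts, hH e] using huv.1
      simp [dirS, hH e, hu', hv']
    rw [hvS]
    rw [Matrix.mul_apply]
    push_cast
    rw [Finset.mul_sum]
    refine Finset.sum_congr rfl ?_
    intro k _
    simp only [Matrix.transpose_apply]
    have hsplit : star (dirS T Hd q e u * ((F u e k i : ℝ) : ℂ)) * 2⁻¹
          * (dirS T Hd q e u * ((F v e k j : ℝ) : ℂ))
        = ((starRingEnd ℂ) (dirS T Hd q e u) * dirS T Hd q e u)
          * (((F u e k i : ℝ) : ℂ) * ((F v e k j : ℝ) : ℂ)) * 2⁻¹ := by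
      simp only [star_mul', Complex.star_def, Complex.conj_ofReal]
      ring
    rw [hsplit, hconj]
    ring
  · rw [if_neg huv]
    rcases not_and_or.mp huv with h | h
    · apply Finset.sum_eq_zero
      intro k _
      simp [Bmat, Matrix.of_apply, if_neg h]
    · apply Finset.sum_eq_zero
      intro k _
      simp [Bmat, Matrix.of_apply, if_neg h]

/-- For a 2-uniform undirected hypergraph (`H(e) = ∅` and `δ_e = 2` for all `e`)
and any `q ∈ ℝ`, the Directed Sheaf Hypergraph Laplacian equals one half of the Hansen–Ghrist
Sheaf Laplacian `L_F`, with `(L_F)_{uu} = Σ_{e: u∈e} F_{u⊴e}ᵀ F_{u⊴e}` and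
`(L_F)_{uv} = −Σ_{e: u,v∈e} F_{u⊴e}ᵀ F_{v⊴e}` for `u ≠ v`; in particular `L` is real. -/
theorem directed_sheaf_laplacian_two_uniform_undirected
    (T Hd : E → Finset V) (q : ℝ) (F : V → E → Matrix (Fin d) (Fin d) ℝ)
    (hd : 0 < d)
    (hdisj : ∀ e, Disjoint (T e) (Hd e))
    (hH : ∀ e, Hd e = ∅)
    (h2 : ∀ e, edeg T Hd e = 2) :
    (Lap T Hd q F = ((1 : ℂ)/2) •
      Matrix.of (fun p r : V × Fin d =>
        if p.1 = r.1 then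
          (((∑ e ∈ Finset.univ.filter (fun e => p.1 ∈ everts T Hd e),
              ((F p.1 e)ᵀ * F p.1 e) p.2 r.2 : ℝ)) : ℂ)
        else
          (((-∑ e ∈ Finset.univ.filter
                (fun e => p.1 ∈ everts T Hd e ∧ r.1 ∈ everts T Hd e),
              ((F p.1 e)ᵀ * F r.1 e) p.2 r.2 : ℝ)) : ℂ))) ∧
    (∀ p r : V × Fin d, (Lap T Hd q F p r).im = 0) := by
  have key : Lap T Hd q F = ((1 : ℂ)/2) •
      Matrix.of (fun p r : V × Fin d =>
        if p.1 = r.1 then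
          (((∑ e ∈ Finset.univ.filter (fun e => p.1 ∈ everts T Hd e),
              ((F p.1 e)ᵀ * F p.1 e) p.2 r.2 : ℝ)) : ℂ)
        else
          (((-∑ e ∈ Finset.univ.filter
                (fun e => p.1 ∈ everts T Hd e ∧ r.1 ∈ everts T Hd e),
              ((F p.1 e)ᵀ * F r.1 e) p.2 r.2 : ℝ)) : ℂ)) := by
    ext ⟨u, i⟩ ⟨v, j⟩
    simp only [Lap, Matrix.sub_apply, Matrix.smul_apply, Matrix.of_apply, smul_eq_mul]
    rw [prod_entry T Hd q F hH h2 u v i j]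
    by_cases huv : u = v
    · subst huv
      simp only [DVmat, Matrix.of_apply, if_pos rfl, Dblk]
      have hfilter : (Finset.univ.filter (fun e => u ∈ everts T Hd e ∧ u ∈ everts T Hd e))
          = Finset.univ.filter (fun e => u ∈ everts T Hd e) := by
        simp
      rw [hfilter]
      simp only [Matrix.sum_apply]
      push_cast
      rw [Finset.mul_sum, ← Finset.sum_sub_distrib]
      exact Finset.sum_congr rfl fun e _ => by ring
    · simp only [DVmat, Matrix.of_apply, if_neg huv]
      push_cast
      rw [← Finset.mul_sum]
      ring
  refine ⟨key, ?_⟩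
  intro p r
  rw [key]
  simp only [Matrix.smul_apply, Matrix.of_apply, smul_eq_mul]
  split <;> simp [Complex.mul_im, Complex.div_im]

end
end

section
/- Let the hypergraph be 2-uniform and arise from a mixed graph G on V without self-loops, in which each distinct unordered pair {u,v} carries at most one edge, which is either directed (hyperedge with T(e) = {u}, H(e) = {v}) or undirected (hyperedge with T(e) = {u,v}, H(e) = ∅). Take d = 1 and choose the restriction maps F_{u⊴e} = F_{v⊴e} = √2 for undirected edges e = {u,v} and F_{u⊴e} = F_{v⊴e} = 1 for directed edges. Then for every q ∈ ℝ the Directed Sheaf Hypergraph Laplacian equals the Magnetic Laplacian of G: L = L^{(q)} := D_s − H^{(q)}, where A ∈ {0,1}^{n×n} has A_{uv} = 1 iff (u,v) is a directed edge or {u,v} is an undirected edge, A_s := (1/2)(A + A^⊤), D_s is the diagonal matrix with (D_s)_{uu} = Σ_{v} (A_s)_{uv}, Θ^{(q)} := 2πq(A − A^⊤), and H^{(q)} := A_s ⊙ exp(iΘ^{(q)}) (entrywise complex exponential and Hadamard product). -/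
open Matrix Complex Finset
open scoped ComplexOrder

noncomputable section

variable {V E : Type*} [Fintype V] [DecidableEq V] [Fintype E] [DecidableEq E] {d : ℕ}

/-- The 0/1 adjacency matrix of the mixed graph underlying a 2-uniform directed hypergraph:
`A_{uv} = 1` iff there is a directed hyperedge with tail `{u}` and head `{v}`, or an undirected
hyperedge `{u, v}`. -/
def adjMx (T Hd : E → Finset V) : Matrix V V ℝ :=
  Matrix.of fun u v =>
    if (∃ e, T e = ({u} : Finset V) ∧ Hd e = ({v} : Finset V)) ∨
       (u ≠ v ∧ ∃ e, T e = ({u, v} : Finset V) ∧ Hd e = ∅) then 1 else 0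

/-- The symmetrized adjacency matrix `A_s = (A + Aᵀ)/2`. -/
def magAs (T Hd : E → Finset V) : Matrix V V ℝ :=
  Matrix.of fun u v => (adjMx T Hd u v + adjMx T Hd v u) / 2

/-- `H^{(q)} = A_s ⊙ exp(i Θ^{(q)})` with phase matrix `Θ^{(q)} = 2πq (A − Aᵀ)`. -/
def magH (T Hd : E → Finset V) (q : ℝ) : Matrix V V ℂ :=
  Matrix.of fun u v =>
    ((magAs T Hd u v : ℝ) : ℂ) *
      Complex.exp (Complex.I *
        (((2 * Real.pi * q * (adjMx T Hd u v - adjMx T Hd v u) : ℝ)) : ℂ))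

/-- The diagonal degree matrix `D_s` with `(D_s)_{uu} = Σ_v (A_s)_{uv}`. -/
def magDs (T Hd : E → Finset V) : Matrix V V ℂ :=
  Matrix.diagonal fun u => ((∑ v, magAs T Hd u v : ℝ) : ℂ)

/-- The Magnetic Laplacian `L^{(q)} = D_s − H^{(q)}`. -/
def magLap (T Hd : E → Finset V) (q : ℝ) : Matrix V V ℂ :=
  magDs T Hd - magH T Hd q

/-- For a 2-uniform directed hypergraph arising from a mixed graph without
self-loops and with at most one edge per unordered pair, with `d = 1` and restriction maps `√2`
on undirected edges and `1` on directed edges, the Directed Sheaf Hypergraph Laplacian equals the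
Magnetic Laplacian `L^{(q)} = D_s − H^{(q)}` for every `q ∈ ℝ`. -/
theorem directed_sheaf_laplacian_eq_magnetic_laplacian
    (T Hd : E → Finset V) (q : ℝ) (F : V → E → Matrix (Fin 1) (Fin 1) ℝ)
    (hdisj : ∀ e, Disjoint (T e) (Hd e))
    (hkind : ∀ e, (∃ u v : V, u ≠ v ∧ T e = ({u} : Finset V) ∧ Hd e = ({v} : Finset V)) ∨
                  (∃ u v : V, u ≠ v ∧ T e = ({u, v} : Finset V) ∧ Hd e = ∅))
    (huniq : ∀ e e', everts T Hd e = everts T Hd e' → e = e')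
    (hF : ∀ e, ∀ u ∈ everts T Hd e,
      F u e = if Hd e = ∅ then Real.sqrt 2 • (1 : Matrix (Fin 1) (Fin 1) ℝ)
              else (1 : Matrix (Fin 1) (Fin 1) ℝ)) :
    ∀ u v : V, ∀ i j : Fin 1,
      Lap T Hd q F (u, i) (v, j) = magLap T Hd q u v := by
  intro u v i j
  have hi : i = 0 := Subsingleton.elim _ _
  have hj : j = 0 := Subsingleton.elim _ _
  subst hi hj
  -- basic facts
  have hcard : ∀ e, (everts T Hd e).card = 2 := by
    intro e
    rcases hkind e with ⟨a, b, hab, hT, hH⟩ | ⟨a, b, hab, hT, hH⟩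
    · show (T e ∪ Hd e).card = 2
      rw [hT, hH, ← Finset.insert_eq,
        Finset.card_insert_of_notMem (by simp [hab]), Finset.card_singleton]
    · show (T e ∪ Hd e).card = 2
      rw [hT, hH, Finset.union_empty,
        Finset.card_insert_of_notMem (by simp [hab]), Finset.card_singleton]
  have hdeg : ∀ e, ((edeg T Hd e : ℂ)) = 2 := by
    intro e; rw [edeg, hcard]; norm_num
  have hFr : ∀ e w, w ∈ everts T Hd e →
      F w e 0 0 = if Hd e = ∅ then Real.sqrt 2 else 1 := by
    intro e w hw
    rw [hF e w hw]
    split <;> simp [Matrix.smul_apply, Matrix.one_apply]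
  have hdS1 : ∀ e w, w ∈ Hd e → dirS T Hd q e w = 1 := by
    intro e w h; rw [dirS, if_pos h]
  have hdS2 : ∀ e w, w ∈ T e → dirS T Hd q e w
      = Complex.exp (-(2 * Real.pi * q) * Complex.I) := by
    intro e w h
    rw [dirS, if_neg (Finset.disjoint_left.mp (hdisj e) h), if_pos h]
  have hstar : star (Complex.exp (-(2 * Real.pi * q) * Complex.I))
      = Complex.exp ((2 * Real.pi * q) * Complex.I) := by
    simp only [Complex.star_def, ← Complex.exp_conj, _root_.map_mul, map_neg,
      Complex.conj_I, Complex.conj_ofReal, map_ofNat]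
    ring_nf
  have hee : Complex.exp ((2 * Real.pi * q) * Complex.I)
      * Complex.exp (-(2 * Real.pi * q) * Complex.I) = 1 := by
    rw [← Complex.exp_add]; ring_nf; exact Complex.exp_zero
  -- entry of B
  have hBe : ∀ e w, Bmat T Hd q F (e, (0 : Fin 1)) (w, (0 : Fin 1))
      = if w ∈ everts T Hd e then dirS T Hd q e w * ((F w e 0 0 : ℝ) : ℂ) else 0 := by
    intro e w
    simp [Bmat, Fdir, Matrix.smul_apply, Matrix.map_apply, smul_eq_mul]
  -- the quadratic-form entry as a sum over edges
  have hmul : ((Bmat T Hd q F)ᴴ * DEinv T Hd 1 * Bmat T Hd q F) (u, (0:Fin 1)) (v, (0:Fin 1))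
      = ∑ e : E, star (Bmat T Hd q F (e, 0) (u, 0)) * ((edeg T Hd e : ℂ))⁻¹
          * Bmat T Hd q F (e, 0) (v, 0) := by
    rw [Matrix.mul_apply]
    have hrow : ∀ p : E × Fin 1, ((Bmat T Hd q F)ᴴ * DEinv T Hd 1) (u, 0) p
        = star (Bmat T Hd q F p (u, 0)) * ((edeg T Hd p.1 : ℂ))⁻¹ := by
      intro p
      simp only [DEinv, Matrix.mul_diagonal, Matrix.conjTranspose_apply]
    simp only [hrow]
    rw [Fintype.sum_prod_type]
    simp [Fin.sum_univ_one]
  -- adjacency values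
  have hevd : ∀ e a b, T e = ({a} : Finset V) → Hd e = ({b} : Finset V) →
      everts T Hd e = {a, b} := by
    intro e a b hT hH
    show T e ∪ Hd e = _
    rw [hT, hH, ← Finset.insert_eq]
  have hevu : ∀ e a b, T e = ({a, b} : Finset V) → Hd e = ∅ →
      everts T Hd e = {a, b} := by
    intro e a b hT hH
    show T e ∪ Hd e = _
    rw [hT, hH, Finset.union_empty]
  have hA0 : ∀ a b : V, (¬ ∃ e, everts T Hd e = ({a, b} : Finset V)) →
      adjMx T Hd a b = 0 := by
    intro a b h
    rw [adjMx, Matrix.of_apply, if_neg]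
    rintro (⟨e, hT, hH⟩ | ⟨_, e, hT, hH⟩)
    · exact h ⟨e, hevd e a b hT hH⟩
    · exact h ⟨e, hevu e a b hT hH⟩
  have hA1 : ∀ (a b : V) e, T e = ({a} : Finset V) → Hd e = ({b} : Finset V) →
      adjMx T Hd a b = 1 ∧ adjMx T Hd b a = 0 := by
    intro a b e hT hH
    have hab : a ≠ b := by
      rcases hkind e with ⟨a', b', hab', hT', hH'⟩ | ⟨a', b', _, _, hH'⟩
      · have ha : a = a' := by
          have := hT.symm.trans hT'; exact Finset.singleton_injective this
        have hb : b = b' := by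
          have := hH.symm.trans hH'; exact Finset.singleton_injective this
        rw [ha, hb]; exact hab'
      · exact absurd (hH.symm.trans hH') (Finset.singleton_ne_empty b)
    constructor
    · rw [adjMx, Matrix.of_apply, if_pos (Or.inl ⟨e, hT, hH⟩)]
    · rw [adjMx, Matrix.of_apply, if_neg]
      rintro (⟨e', hT', hH'⟩ | ⟨_, e', hT', hH'⟩)
      · have he : e' = e := huniq e' e (by
          rw [hevd e' b a hT' hH', hevd e a b hT hH, Finset.pair_comm])
        rw [he] at hT'
        exact hab (Finset.singleton_injective (hT.symm.trans hT'))
      · have he : e' = e := huniq e' e (by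
          rw [hevu e' b a hT' hH', hevd e a b hT hH, Finset.pair_comm])
        rw [he] at hH'
        exact Finset.singleton_ne_empty b (hH.symm.trans hH')
  have hA2 : ∀ (a b : V) e, a ≠ b → T e = ({a, b} : Finset V) → Hd e = ∅ →
      adjMx T Hd a b = 1 ∧ adjMx T Hd b a = 1 := by
    intro a b e hab hT hH
    constructor
    · rw [adjMx, Matrix.of_apply, if_pos (Or.inr ⟨hab, e, hT, hH⟩)]
    · rw [adjMx, Matrix.of_apply,
        if_pos (Or.inr ⟨hab.symm, e, by rw [hT, Finset.pair_comm], hH⟩)]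
  -- the goal, unfolded
  simp only [Lap, Matrix.sub_apply]
  rw [hmul]
  by_cases huv : u = v
  · -- diagonal case
    subst huv
    have hAuu : ∀ w, adjMx T Hd w w = 0 := by
      intro w
      rw [adjMx, Matrix.of_apply, if_neg]
      rintro (⟨e, hT, hH⟩ | ⟨h, _⟩)
      · have hd := hdisj e
        rw [hT, hH] at hd
        simp at hd
      · exact h rfl
    have hAsuu : ∀ w, magAs T Hd w w = 0 := by
      intro w; rw [magAs, Matrix.of_apply, hAuu]; norm_num
    have hDV : DVmat T Hd F (u, (0 : Fin 1)) (u, (0 : Fin 1))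
        = ∑ e ∈ Finset.univ.filter (fun e => u ∈ everts T Hd e),
            ((F u e 0 0 : ℝ) : ℂ) * ((F u e 0 0 : ℝ) : ℂ) := by
      simp only [DVmat, Matrix.of_apply, if_pos rfl, Dblk, Matrix.sum_apply,
        Matrix.mul_apply, Matrix.transpose_apply, Fin.sum_univ_one]
      push_cast
      rfl
    have hterm : (∑ e : E, star (Bmat T Hd q F (e, 0) (u, 0)) * ((edeg T Hd e : ℂ))⁻¹
          * Bmat T Hd q F (e, 0) (u, 0))
        = ∑ e ∈ Finset.univ.filter (fun e => u ∈ everts T Hd e),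
            ((F u e 0 0 : ℝ) : ℂ) * ((F u e 0 0 : ℝ) : ℂ) / 2 := by
      rw [Finset.sum_filter]
      refine Finset.sum_congr rfl ?_
      intro e _
      rw [hBe, hdeg]
      by_cases hu : u ∈ everts T Hd e
      · rw [if_pos hu, if_pos hu]
        have hsd : star (dirS T Hd q e u) * dirS T Hd q e u = 1 := by
          rcases Finset.mem_union.mp hu with h | h
          · rw [hdS2 e u h, hstar]
            exact hee
          · rw [hdS1 e u h]; simp
        rw [star_mul', Complex.star_def, Complex.conj_ofReal, ← Complex.star_def]
        calc star (dirS T Hd q e u) * ((F u e 0 0 : ℝ) : ℂ) * (2:ℂ)⁻¹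
              * (dirS T Hd q e u * ((F u e 0 0 : ℝ) : ℂ))
            = star (dirS T Hd q e u) * dirS T Hd q e u
              * (((F u e 0 0 : ℝ) : ℂ) * ((F u e 0 0 : ℝ) : ℂ)) * 2⁻¹ := by ring
          _ = ((F u e 0 0 : ℝ) : ℂ) * ((F u e 0 0 : ℝ) : ℂ) / 2 := by rw [hsd]; ring
      · rw [if_neg hu, if_neg hu]; simp
    have hR : magLap T Hd q u u = ∑ w : V, ((magAs T Hd u w : ℝ) : ℂ) := by
      rw [magLap, Matrix.sub_apply, magDs, Matrix.diagonal_apply_eq, magH,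
        Matrix.of_apply, hAsuu]
      push_cast
      ring
    -- the combinatorial identity
    have hperv : ∀ w : V, ((magAs T Hd u w : ℝ) : ℂ)
        = ∑ e : E, if everts T Hd e = {u, w}
            then (if Hd e = ∅ then (1:ℂ) else 2⁻¹) else 0 := by
      intro w
      by_cases hw : u = w
      · subst hw
        rw [hAsuu]
        rw [Finset.sum_eq_zero]
        · simp
        intro e _
        rw [if_neg]
        intro h
        have hc := hcard e
        rw [h] at hc
        simp at hc
      · by_cases hex : ∃ e, everts T Hd e = ({u, w} : Finset V)
        · obtain ⟨e₀, he₀⟩ := hex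
          rw [Finset.sum_eq_single e₀]
          · rw [if_pos he₀]
            rcases hkind e₀ with ⟨a, b, hab, hT, hH⟩ | ⟨a, b, hab, hT, hH⟩
            · have hpair : ({a, b} : Finset V) = {u, w} := by
                rw [← hevd e₀ a b hT hH, he₀]
              have hHne : Hd e₀ ≠ ∅ := by rw [hH]; exact Finset.singleton_ne_empty b
              rw [if_neg hHne]
              have hane : a = u ∨ a = w := by
                have : a ∈ ({u, w} : Finset V) := by rw [← hpair]; simp
                simpa using this
              have hbne : b = u ∨ b = w := by
                have : b ∈ ({u, w} : Finset V) := by rw [← hpair]; simp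
                simpa using this
              rcases hane with ha | ha
              · have hb : b = w := by
                  rcases hbne with h | h
                  · exact absurd (ha.trans h.symm) hab
                  · exact h
                rw [ha] at hT; rw [hb] at hH
                obtain ⟨h1, h2⟩ := hA1 u w e₀ hT hH
                rw [magAs, Matrix.of_apply, h1, h2]
                norm_num
              · have hb : b = u := by
                  rcases hbne with h | h
                  · exact h
                  · exact absurd (ha.trans h.symm) hab
                rw [ha] at hT; rw [hb] at hH
                obtain ⟨h1, h2⟩ := hA1 w u e₀ hT hH
                rw [magAs, Matrix.of_apply, h1, h2]
                norm_num
            · have hT' : T e₀ = ({u, w} : Finset V) := by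
                have hte : everts T Hd e₀ = T e₀ := by
                  show T e₀ ∪ Hd e₀ = T e₀
                  rw [hH, Finset.union_empty]
                rw [← hte, he₀]
              rw [if_pos hH]
              obtain ⟨h1, h2⟩ := hA2 u w e₀ hw hT' hH
              rw [magAs, Matrix.of_apply, h1, h2]
              norm_num
          · intro e _ hne
            rw [if_neg]
            intro h
            exact hne (huniq e e₀ (h.trans he₀.symm))
          · intro h
            exact absurd (Finset.mem_univ e₀) h
        · rw [show magAs T Hd u w = 0 from by
            rw [magAs, Matrix.of_apply, hA0 u w hex, hA0 w u (by
              rintro ⟨e, h⟩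
              exact hex ⟨e, by rw [h, Finset.pair_comm]⟩)]
            norm_num]
          rw [Finset.sum_eq_zero]
          · simp
          intro e _
          rw [if_neg]
          intro h
          exact hex ⟨e, h⟩
    have hinner : ∀ e : E,
        (∑ w : V, if everts T Hd e = {u, w}
            then (if Hd e = ∅ then (1:ℂ) else 2⁻¹) else 0)
        = if u ∈ everts T Hd e then (if Hd e = ∅ then (1:ℂ) else 2⁻¹) else 0 := by
      intro e
      by_cases hu : u ∈ everts T Hd e
      · rw [if_pos hu]
        obtain ⟨a, b, hab, hevab⟩ := Finset.card_eq_two.mp (hcard e)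
        have hu' : u = a ∨ u = b := by
          have hm := hu
          rw [hevab] at hm
          simpa using hm
        obtain ⟨w₀, hw₀⟩ : ∃ w₀, everts T Hd e = {u, w₀} := by
          rcases hu' with h | h
          · exact ⟨b, by rw [hevab, h]⟩
          · exact ⟨a, by rw [hevab, h, Finset.pair_comm]⟩
        have hw₀u : w₀ ≠ u := by
          intro h
          have hc := hcard e
          rw [hw₀, h] at hc
          simp at hc
        rw [Finset.sum_eq_single w₀]
        · rw [if_pos hw₀]
        · intro w _ hne
          rw [if_neg]
          intro h
          apply hne
          have hm : w₀ ∈ ({u, w} : Finset V) := by rw [← h, hw₀]; simp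
          rcases Finset.mem_insert.mp hm with h' | h'
          · exact absurd h' hw₀u
          · exact (Finset.mem_singleton.mp h').symm
        · intro h
          exact absurd (Finset.mem_univ w₀) h
      · rw [if_neg hu, Finset.sum_eq_zero]
        intro w _
        rw [if_neg]
        intro h
        apply hu
        rw [h]; simp
    have hkey : (∑ e ∈ Finset.univ.filter (fun e => u ∈ everts T Hd e),
          (if Hd e = ∅ then (1:ℂ) else 2⁻¹))
        = ∑ w : V, ((magAs T Hd u w : ℝ) : ℂ) := by
      rw [Finset.sum_filter]
      calc (∑ e : E, if u ∈ everts T Hd e then (if Hd e = ∅ then (1:ℂ) else 2⁻¹) else 0)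
          = ∑ e : E, ∑ w : V, (if everts T Hd e = {u, w}
              then (if Hd e = ∅ then (1:ℂ) else 2⁻¹) else 0) := by
            refine Finset.sum_congr rfl fun e _ => ?_
            rw [hinner]
        _ = ∑ w : V, ∑ e : E, (if everts T Hd e = {u, w}
              then (if Hd e = ∅ then (1:ℂ) else 2⁻¹) else 0) := Finset.sum_comm
        _ = ∑ w : V, ((magAs T Hd u w : ℝ) : ℂ) := by
            refine Finset.sum_congr rfl fun w _ => ?_
            rw [← hperv]
    rw [hDV, hterm, hR, ← hkey, ← Finset.sum_sub_distrib]
    refine Finset.sum_congr rfl ?_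
    intro e he
    have hu : u ∈ everts T Hd e := (Finset.mem_filter.mp he).2
    rw [hFr e u hu]
    by_cases hH : Hd e = ∅
    · rw [if_pos hH, if_pos hH]
      have h2 : ((Real.sqrt 2 : ℝ) : ℂ) * ((Real.sqrt 2 : ℝ) : ℂ) = 2 := by
        rw [← Complex.ofReal_mul, Real.mul_self_sqrt (by norm_num)]
        norm_num
      rw [h2]
      norm_num
    · rw [if_neg hH, if_neg hH]
      norm_num
  · -- off-diagonal case
    have hDV0 : DVmat T Hd F (u, (0 : Fin 1)) (v, (0 : Fin 1)) = 0 := by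
      simp [DVmat, huv]
    have hR : magLap T Hd q u v
        = -((((adjMx T Hd u v + adjMx T Hd v u) / 2 : ℝ) : ℂ)
            * Complex.exp (Complex.I
              * (((2 * Real.pi * q * (adjMx T Hd u v - adjMx T Hd v u)) : ℝ) : ℂ))) := by
      rw [magLap, Matrix.sub_apply, magDs, Matrix.diagonal_apply_ne _ huv, magH, magAs]
      simp only [Matrix.of_apply]
      ring
    have hevuv : ∀ e, u ∈ everts T Hd e → v ∈ everts T Hd e →
        everts T Hd e = ({u, v} : Finset V) := by
      intro e hu hv
      refine (Finset.eq_of_subset_of_card_le ?_ ?_).symm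
      · exact Finset.insert_subset hu (Finset.singleton_subset_iff.mpr hv)
      · rw [hcard e, Finset.card_insert_of_notMem (by simp [huv]),
          Finset.card_singleton]
    by_cases hex : ∃ e, everts T Hd e = ({u, v} : Finset V)
    · obtain ⟨e₀, he₀⟩ := hex
      have hu0 : u ∈ everts T Hd e₀ := by rw [he₀]; simp
      have hv0 : v ∈ everts T Hd e₀ := by rw [he₀]; simp
      have hsum : (∑ e : E, star (Bmat T Hd q F (e, 0) (u, 0)) * ((edeg T Hd e : ℂ))⁻¹
            * Bmat T Hd q F (e, 0) (v, 0))
          = star (Bmat T Hd q F (e₀, 0) (u, 0)) * ((edeg T Hd e₀ : ℂ))⁻¹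
            * Bmat T Hd q F (e₀, 0) (v, 0) := by
        apply Finset.sum_eq_single e₀
        · intro e _ hne
          rw [hBe, hBe]
          by_cases hu : u ∈ everts T Hd e
          · by_cases hv : v ∈ everts T Hd e
            · exact absurd (huniq e e₀ ((hevuv e hu hv).trans he₀.symm)) hne
            · rw [if_neg hv, mul_zero]
          · rw [if_neg hu]
            simp
        · intro h
          exact absurd (Finset.mem_univ e₀) h
      rw [hDV0, hsum, hR, hBe, hBe, if_pos hu0, if_pos hv0, hdeg]
      rcases hkind e₀ with ⟨a, b, hab, hT, hH⟩ | ⟨a, b, hab, hT, hH⟩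
      · -- directed edge
        have hpair : ({a, b} : Finset V) = {u, v} := by
          rw [← hevd e₀ a b hT hH, he₀]
        have hHne : Hd e₀ ≠ ∅ := by rw [hH]; exact Finset.singleton_ne_empty b
        have hane : a = u ∨ a = v := by
          have : a ∈ ({u, v} : Finset V) := by rw [← hpair]; simp
          simpa using this
        have hbne : b = u ∨ b = v := by
          have : b ∈ ({u, v} : Finset V) := by rw [← hpair]; simp
          simpa using this
        rcases hane with ha | ha
        · have hb : b = v := by
            rcases hbne with h | h
            · exact absurd (ha.trans h.symm) hab
            · exact h
          rw [ha] at hT; rw [hb] at hH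
          obtain ⟨h1, h2⟩ := hA1 u v e₀ hT hH
          have hdu : dirS T Hd q e₀ u = Complex.exp (-(2 * Real.pi * q) * Complex.I) :=
            hdS2 e₀ u (by rw [hT]; simp)
          have hdv : dirS T Hd q e₀ v = 1 := hdS1 e₀ v (by rw [hH]; simp)
          have hFu : F u e₀ 0 0 = 1 := by rw [hFr e₀ u hu0, if_neg hHne]
          have hFv : F v e₀ 0 0 = 1 := by rw [hFr e₀ v hv0, if_neg hHne]
          rw [hdu, hdv, hFu, hFv, h1, h2, star_mul', hstar, Complex.star_def,
            Complex.conj_ofReal]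
          push_cast
          ring_nf
        · have hb : b = u := by
            rcases hbne with h | h
            · exact h
            · exact absurd (ha.trans h.symm) hab
          rw [ha] at hT; rw [hb] at hH
          obtain ⟨h1, h2⟩ := hA1 v u e₀ hT hH
          have hdu : dirS T Hd q e₀ u = 1 := hdS1 e₀ u (by rw [hH]; simp)
          have hdv : dirS T Hd q e₀ v = Complex.exp (-(2 * Real.pi * q) * Complex.I) :=
            hdS2 e₀ v (by rw [hT]; simp)
          have hFu : F u e₀ 0 0 = 1 := by rw [hFr e₀ u hu0, if_neg hHne]
          have hFv : F v e₀ 0 0 = 1 := by rw [hFr e₀ v hv0, if_neg hHne]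
          rw [hdu, hdv, hFu, hFv, h1, h2]
          push_cast
          simp only [star_one, mul_one, one_mul]
          ring_nf
      · -- undirected edge
        have hT' : T e₀ = ({u, v} : Finset V) := by
          have hte : everts T Hd e₀ = T e₀ := by
            show T e₀ ∪ Hd e₀ = T e₀
            rw [hH, Finset.union_empty]
          rw [← hte, he₀]
        obtain ⟨h1, h2⟩ := hA2 u v e₀ huv hT' hH
        have hdu : dirS T Hd q e₀ u = Complex.exp (-(2 * Real.pi * q) * Complex.I) :=
          hdS2 e₀ u (by rw [hT']; simp)
        have hdv : dirS T Hd q e₀ v = Complex.exp (-(2 * Real.pi * q) * Complex.I) :=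
          hdS2 e₀ v (by rw [hT']; simp)
        have hFu : F u e₀ 0 0 = Real.sqrt 2 := by rw [hFr e₀ u hu0, if_pos hH]
        have hFv : F v e₀ 0 0 = Real.sqrt 2 := by rw [hFr e₀ v hv0, if_pos hH]
        have h2r : ((Real.sqrt 2 : ℝ) : ℂ) * ((Real.sqrt 2 : ℝ) : ℂ) = 2 := by
          rw [← Complex.ofReal_mul, Real.mul_self_sqrt (by norm_num)]
          norm_num
        rw [hdu, hdv, hFu, hFv, h1, h2, star_mul', hstar, Complex.star_def,
          Complex.conj_ofReal]
        have hL : Complex.exp ((2 * Real.pi * q) * Complex.I) * ((Real.sqrt 2 : ℝ) : ℂ)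
              * (2:ℂ)⁻¹
              * (Complex.exp (-(2 * Real.pi * q) * Complex.I) * ((Real.sqrt 2 : ℝ) : ℂ))
            = 1 := by
          calc Complex.exp ((2 * Real.pi * q) * Complex.I) * ((Real.sqrt 2 : ℝ) : ℂ)
                * (2:ℂ)⁻¹
                * (Complex.exp (-(2 * Real.pi * q) * Complex.I) * ((Real.sqrt 2 : ℝ) : ℂ))
              = (Complex.exp ((2 * Real.pi * q) * Complex.I)
                  * Complex.exp (-(2 * Real.pi * q) * Complex.I))
                * (((Real.sqrt 2 : ℝ) : ℂ) * ((Real.sqrt 2 : ℝ) : ℂ)) * 2⁻¹ := by ring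
            _ = 1 := by rw [hee, h2r]; norm_num
        rw [hL]
        push_cast
        norm_num
    · have hAz : adjMx T Hd u v = 0 := hA0 u v hex
      have hAz' : adjMx T Hd v u = 0 := hA0 v u (by
        rintro ⟨e, h⟩
        exact hex ⟨e, by rw [h, Finset.pair_comm]⟩)
      have hsum0 : (∑ e : E, star (Bmat T Hd q F (e, 0) (u, 0)) * ((edeg T Hd e : ℂ))⁻¹
            * Bmat T Hd q F (e, 0) (v, 0)) = 0 := by
        apply Finset.sum_eq_zero
        intro e _
        rw [hBe, hBe]
        by_cases hu : u ∈ everts T Hd e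
        · by_cases hv : v ∈ everts T Hd e
          · exact absurd ⟨e, hevuv e hu hv⟩ hex
          · rw [if_neg hv, mul_zero]
        · rw [if_neg hu]
          simp
      rw [hDV0, hsum0, hR, hAz, hAz']
      push_cast
      norm_num


end
end

section
/- Suppose the hypergraph is undirected (every hyperedge e satisfies H(e) = ∅), take the trivial sheaf (d = 1 and F_{u⊴e} = 1 for all incidences), assume every vertex is contained in at least one hyperedge, and let q ∈ ℝ be arbitrary. Then the Normalized Directed Sheaf Hypergraph Laplacian equals Zhou's hypergraph Laplacian with unit weights: L_N = I_n − D_V^{−1/2} B^⊤ D_E^{−1} B D_V^{−1/2}, where B ∈ {0,1}^{m×n} is the binary incidence matrix (B_{eu} = 1 iff u ∈ e), D_E is the diagonal matrix of hyperedge degrees δ_e, and D_V is the diagonal matrix of vertex degrees d_u := |{e ∈ E : u ∈ e}|. -/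
open Matrix Complex Finset
open scoped ComplexOrder

noncomputable section

variable {V E : Type*} [Fintype V] [DecidableEq V] [Fintype E] [DecidableEq E] {d : ℕ}

/-- The vertex degree `d_u = |{e ∈ E : u ∈ e}|`. -/
def degv (T Hd : E → Finset V) (u : V) : ℕ :=
  (Finset.univ.filter (fun e => u ∈ everts T Hd e)).card

/-- For an undirected hypergraph (`H(e) = ∅`) with the trivial sheaf
(`d = 1`, `F_{u⊴e} = 1`), every vertex in at least one hyperedge, and arbitrary `q ∈ ℝ`, the
Normalized Directed Sheaf Hypergraph Laplacian coincides with Zhou's hypergraph Laplacian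
`I − D_V^{-1/2} Bᵀ D_E^{-1} B D_V^{-1/2}`, where `B` is the binary incidence matrix. -/
theorem normalized_directed_sheaf_laplacian_eq_zhou
    (T Hd : E → Finset V) (q : ℝ)
    (hH : ∀ e, Hd e = ∅)
    (hne : ∀ e, (everts T Hd e).Nonempty)
    (hcov : ∀ u : V, 0 < degv T Hd u) :
    ∀ u v : V, ∀ i j : Fin 1,
      (Matrix.diagonal (fun p : V × Fin 1 => ((Real.sqrt (degv T Hd p.1) : ℂ))⁻¹) *
        Lap T Hd q (fun _ _ => (1 : Matrix (Fin 1) (Fin 1) ℝ)) *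
       Matrix.diagonal (fun p : V × Fin 1 => ((Real.sqrt (degv T Hd p.1) : ℂ))⁻¹))
        (u, i) (v, j) =
      ((1 : Matrix V V ℂ) -
        Matrix.diagonal (fun w => ((Real.sqrt (degv T Hd w) : ℂ))⁻¹) *
          (Matrix.of fun e w => if w ∈ everts T Hd e then (1 : ℂ) else 0)ᵀ *
          Matrix.diagonal (fun e => ((edeg T Hd e : ℂ))⁻¹) *
          (Matrix.of fun e w => if w ∈ everts T Hd e then (1 : ℂ) else 0) *
          Matrix.diagonal (fun w => ((Real.sqrt (degv T Hd w) : ℂ))⁻¹)) u v := by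
  intro u v i j
  obtain rfl : i = 0 := Subsingleton.elim _ _
  obtain rfl : j = 0 := Subsingleton.elim _ _
  set c : ℂ := Complex.exp (-(2 * Real.pi * q) * Complex.I) with hc
  have hconj : (starRingEnd ℂ) c * c = 1 := by
    rw [hc, ← Complex.exp_conj, ← Complex.exp_add]
    have h2 : (starRingEnd ℂ) (-(2 * Real.pi * q) * Complex.I)
        = -(-(2 * Real.pi * q) * Complex.I) := by
      have h3 : ((-(2 * Real.pi * q) : ℝ) : ℂ) = -(2 * Real.pi * q) := by push_cast; ring
      rw [← h3, _root_.map_mul, Complex.conj_ofReal, Complex.conj_I]; ring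
    rw [h2, neg_add_cancel, Complex.exp_zero]
  have hLap : Lap T Hd q (fun _ _ => (1 : Matrix (Fin 1) (Fin 1) ℝ)) (u, 0) (v, 0)
      = (if u = v then (degv T Hd u : ℂ) else 0)
        - ∑ e : E, (if u ∈ everts T Hd e ∧ v ∈ everts T Hd e
            then ((edeg T Hd e : ℂ))⁻¹ else 0) := by
    simp [Lap, DVmat, Dblk, Bmat, DEinv, Fdir, dirS, hH, Matrix.mul_apply,
      Matrix.sub_apply, Matrix.conjTranspose_apply, Fintype.sum_prod_type,
      Matrix.one_apply, degv, everts, ← hc, Matrix.diagonal_apply, Prod.mk.injEq,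
      Finset.sum_ite_eq, Finset.sum_ite_eq']
    have hc' : Complex.exp (-(2 * Real.pi * q * Complex.I)) = c := by rw [hc]; ring_nf
    refine Finset.sum_congr rfl fun e _ => ?_
    by_cases hu : u ∈ T e <;> by_cases hv : v ∈ T e
    · simp only [hu, hv, if_true, and_self]
      rw [show (-(2 * (Real.pi : ℂ) * q * Complex.I)) = -(2 * Real.pi * q) * Complex.I
        by ring, ← hc, mul_right_comm, hconj, one_mul]
    · simp [hu, hv]
    · simp [hu, hv]
    · simp [hu, hv]
  have hdu : ∀ w : V, ((Real.sqrt (degv T Hd w) : ℂ))⁻¹ * (degv T Hd w : ℂ)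
      * ((Real.sqrt (degv T Hd w) : ℂ))⁻¹ = 1 := by
    intro w
    have h0 : (0 : ℝ) < degv T Hd w := by exact_mod_cast hcov w
    have hs : Real.sqrt (degv T Hd w) * Real.sqrt (degv T Hd w) = degv T Hd w :=
      Real.mul_self_sqrt h0.le
    have hns : ((Real.sqrt (degv T Hd w) : ℝ) : ℂ) ≠ 0 :=
      Complex.ofReal_ne_zero.mpr (ne_of_gt (Real.sqrt_pos.mpr h0))
    have hsC : ((Real.sqrt (degv T Hd w) : ℝ) : ℂ) * ((Real.sqrt (degv T Hd w) : ℝ) : ℂ)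
        = ((degv T Hd w : ℕ) : ℂ) := by
      rw [← Complex.ofReal_mul, hs]; norm_cast
    rw [← hsC, show ∀ a : ℂ, a⁻¹ * (a * a) * a⁻¹ = (a⁻¹ * a) * (a * a⁻¹) from fun a => by ring,
      inv_mul_cancel₀ hns, mul_inv_cancel₀ hns, one_mul]
  have hcol : ∀ (e : E) (cc : ℂ),
      (∑ x : V, if x ∈ everts T Hd e then if u = x then cc else 0 else 0)
        = if u ∈ everts T Hd e then cc else 0 := by
    intro e cc
    have hpt : ∀ x : V, (if x ∈ everts T Hd e then if u = x then cc else 0 else 0)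
        = if u = x then (if x ∈ everts T Hd e then cc else 0) else 0 := by
      intro x; by_cases h1 : u = x <;> by_cases h2 : x ∈ everts T Hd e <;> simp [h1, h2]
    simp [hpt, Finset.sum_ite_eq]
  rw [Matrix.mul_diagonal, Matrix.diagonal_mul, hLap]
  simp only [Matrix.sub_apply, Matrix.one_apply, Matrix.mul_apply, Matrix.diagonal_apply,
    Matrix.transpose_apply, Matrix.of_apply, ite_mul, mul_ite, mul_zero, zero_mul,
    Finset.sum_ite_eq, Finset.sum_ite_eq', Finset.mem_univ, if_true, hcol]
  rw [mul_sub, sub_mul, Finset.mul_sum, Finset.sum_mul]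
  congr 1
  · by_cases huv : u = v
    · subst huv; simpa using hdu u
    · simp [huv]
  · rw [Finset.sum_mul]
    refine Finset.sum_congr rfl fun e _ => ?_
    by_cases hu : u ∈ everts T Hd e <;> by_cases hv : v ∈ everts T Hd e <;>
      simp [hu, hv]


end
end

section
/- Take the trivial sheaf (d = 1, F_{u⊴e} = 1 for all incidences), the charge parameter q = 1/4, and assume every vertex is contained in at least one hyperedge, with vertex degrees d_u := |{e ∈ E : u ∈ e}|. Then the entries of the Normalized Directed Sheaf Hypergraph Laplacian are: (L_N)_{uu} = 1 − Σ_{e: u∈e} 1/(d_u δ_e), and for u ≠ v, (L_N)_{uv} = ( − Σ_{e: u,v∈H(e) or u,v∈T(e)} 1/δ_e − i·( Σ_{e: u∈T(e), v∈H(e)} 1/δ_e − Σ_{e: u∈H(e), v∈T(e)} 1/δ_e ) ) / (√(d_u)·√(d_v)). That is, L_N coincides with the Generalized Directed Laplacian of Fiorini et al. with identity weight matrix. -/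
open Matrix Complex Finset
open scoped ComplexOrder

noncomputable section

variable {V E : Type*} [Fintype V] [DecidableEq V] [Fintype E] [DecidableEq E] {d : ℕ}

set_option linter.unusedSectionVars false
set_option linter.unreachableTactic false
set_option linter.unusedTactic false
set_option linter.unnecessarySeqFocus false
set_option linter.unusedVariables false


lemma exp_val : Complex.exp (-(2 * (Real.pi : ℂ) * (((1:ℝ)/4 : ℝ) : ℂ)) * Complex.I) = -Complex.I := by
  have h : -(2 * (Real.pi : ℂ) * (((1:ℝ)/4 : ℝ) : ℂ)) = ((-(Real.pi/2) : ℝ) : ℂ) := by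
    push_cast; ring
  rw [h, Complex.exp_mul_I]
  simp [← Complex.ofReal_cos, ← Complex.ofReal_sin, Real.cos_pi_div_two, Real.sin_pi_div_two]

lemma dirS_val (T Hd : E → Finset V) (e : E) (u : V) :
    dirS T Hd ((1:ℝ)/4) e u = if u ∈ Hd e then 1 else if u ∈ T e then -Complex.I else 0 := by
  unfold dirS
  rw [exp_val]

lemma Bmat_entry (T Hd : E → Finset V) (q : ℝ) (p : E × Fin 1) (r : V × Fin 1) :
    Bmat T Hd q (fun _ _ => (1 : Matrix (Fin 1) (Fin 1) ℝ)) p r = dirS T Hd q p.1 r.1 := by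
  simp only [Bmat, Fdir, Matrix.of_apply, Matrix.smul_apply, Matrix.map_apply,
    Matrix.one_apply, Subsingleton.elim p.2 r.2, if_pos rfl]
  split_ifs with h
  · rw [Complex.ofReal_one, smul_eq_mul, mul_one]
  · rw [dirS]
    rw [everts, Finset.mem_union] at h
    push_neg at h
    rw [if_neg h.2, if_neg h.1]

lemma quad_entry (T Hd : E → Finset V) (q : ℝ) (u v : V) (i j : Fin 1) :
    ((Bmat T Hd q (fun _ _ => (1 : Matrix (Fin 1) (Fin 1) ℝ)))ᴴ * DEinv T Hd 1 *
      Bmat T Hd q (fun _ _ => (1 : Matrix (Fin 1) (Fin 1) ℝ))) (u, i) (v, j) =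
    ∑ e : E, (starRingEnd ℂ) (dirS T Hd q e u) * ((edeg T Hd e : ℂ))⁻¹ * dirS T Hd q e v := by
  rw [Matrix.mul_apply]
  rw [Fintype.sum_prod_type]
  simp only [Fin.sum_univ_one]
  refine Finset.sum_congr rfl fun e _ => ?_
  rw [DEinv, Matrix.mul_diagonal, Matrix.conjTranspose_apply, Bmat_entry, Bmat_entry]
  rfl

lemma DVmat_entry (T Hd : E → Finset V) (u v : V) (i j : Fin 1) :
    DVmat T Hd (fun _ _ => (1 : Matrix (Fin 1) (Fin 1) ℝ)) (u, i) (v, j) =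
    if u = v then (degv T Hd u : ℂ) else 0 := by
  simp only [DVmat, Matrix.of_apply]
  split_ifs with h
  · rw [Dblk, degv]
    norm_num [Matrix.sum_apply, Matrix.one_apply, Subsingleton.elim i j]
  · rfl

lemma ptwise_diag (T Hd : E → Finset V) (u : V) (e : E) :
    (starRingEnd ℂ) (dirS T Hd ((1:ℝ)/4) e u) * ((edeg T Hd e : ℂ))⁻¹ *
      dirS T Hd ((1:ℝ)/4) e u =
    if u ∈ everts T Hd e then ((edeg T Hd e : ℂ))⁻¹ else 0 := by
  rw [dirS_val]
  by_cases h1 : u ∈ Hd e <;> by_cases h2 : u ∈ T e <;>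
    simp only [everts, Finset.mem_union] <;>
    simp [h1, h2, Complex.conj_I, Complex.I_mul_I] <;> ring_nf <;>
    simp [Complex.I_sq] <;> ring

lemma ptwise_off (T Hd : E → Finset V) (hdisj : ∀ e, Disjoint (T e) (Hd e))
    (u v : V) (e : E) :
    (starRingEnd ℂ) (dirS T Hd ((1:ℝ)/4) e u) * ((edeg T Hd e : ℂ))⁻¹ *
      dirS T Hd ((1:ℝ)/4) e v =
    (if (u ∈ Hd e ∧ v ∈ Hd e) ∨ (u ∈ T e ∧ v ∈ T e) then ((edeg T Hd e : ℂ))⁻¹ else 0)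
    + Complex.I * (if u ∈ T e ∧ v ∈ Hd e then ((edeg T Hd e : ℂ))⁻¹ else 0)
    - Complex.I * (if u ∈ Hd e ∧ v ∈ T e then ((edeg T Hd e : ℂ))⁻¹ else 0) := by
  have hd := Finset.disjoint_left.mp (hdisj e)
  rw [dirS_val, dirS_val]
  by_cases h1 : u ∈ Hd e <;> by_cases h2 : u ∈ T e <;>
    by_cases h3 : v ∈ Hd e <;> by_cases h4 : v ∈ T e
  all_goals first
    | exact absurd h1 (hd h2)
    | exact absurd h3 (hd h4)
    | (simp [h1, h2, h3, h4, Complex.conj_I, Complex.I_mul_I] <;> ring_nf <;>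
        simp [Complex.I_sq] <;> ring)

lemma scalar_diag (s S : ℂ) (hs : s ≠ 0) :
    s⁻¹ * (s * s - S) * s⁻¹ = 1 - (s * s)⁻¹ * S := by
  field_simp

lemma scalar_off (s t Q : ℂ) :
    s⁻¹ * (0 - Q) * t⁻¹ = (-Q) / (s * t) := by
  rw [div_eq_mul_inv, mul_inv]
  ring


/-- With the trivial sheaf (`d = 1`, `F_{u⊴e} = 1`), charge `q = 1/4`, and every
vertex in at least one hyperedge, the entries of the Normalized Directed Sheaf Hypergraph
Laplacian are `(L_N)_{uu} = 1 − Σ_{e: u∈e} 1/(d_u δ_e)` and, for `u ≠ v`,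
`(L_N)_{uv} = (−Σ_{same role} 1/δ_e − i(Σ_{u∈T,v∈H} 1/δ_e − Σ_{u∈H,v∈T} 1/δ_e))/(√d_u √d_v)`:
it coincides with the Generalized Directed Laplacian of Fiorini et al. with identity weights. -/
theorem normalized_directed_sheaf_laplacian_eq_generalized_directed
    (T Hd : E → Finset V)
    (hdisj : ∀ e, Disjoint (T e) (Hd e))
    (hne : ∀ e, (everts T Hd e).Nonempty)
    (hcov : ∀ u : V, 0 < degv T Hd u) :
    (∀ u : V, ∀ i j : Fin 1,
      (Matrix.diagonal (fun p : V × Fin 1 => ((Real.sqrt (degv T Hd p.1) : ℂ))⁻¹) *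
        Lap T Hd ((1 : ℝ)/4) (fun _ _ => (1 : Matrix (Fin 1) (Fin 1) ℝ)) *
       Matrix.diagonal (fun p : V × Fin 1 => ((Real.sqrt (degv T Hd p.1) : ℂ))⁻¹))
        (u, i) (u, j) =
      1 - ∑ e ∈ Finset.univ.filter (fun e => u ∈ everts T Hd e),
            ((degv T Hd u : ℂ) * (edeg T Hd e : ℂ))⁻¹) ∧
    (∀ u v : V, u ≠ v → ∀ i j : Fin 1,
      (Matrix.diagonal (fun p : V × Fin 1 => ((Real.sqrt (degv T Hd p.1) : ℂ))⁻¹) *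
        Lap T Hd ((1 : ℝ)/4) (fun _ _ => (1 : Matrix (Fin 1) (Fin 1) ℝ)) *
       Matrix.diagonal (fun p : V × Fin 1 => ((Real.sqrt (degv T Hd p.1) : ℂ))⁻¹))
        (u, i) (v, j) =
      (-(∑ e ∈ Finset.univ.filter
            (fun e => (u ∈ Hd e ∧ v ∈ Hd e) ∨ (u ∈ T e ∧ v ∈ T e)),
          ((edeg T Hd e : ℂ))⁻¹)
       - Complex.I *
          ((∑ e ∈ Finset.univ.filter (fun e => u ∈ T e ∧ v ∈ Hd e),
              ((edeg T Hd e : ℂ))⁻¹)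
           - (∑ e ∈ Finset.univ.filter (fun e => u ∈ Hd e ∧ v ∈ T e),
              ((edeg T Hd e : ℂ))⁻¹))) /
        ((Real.sqrt (degv T Hd u) : ℂ) * (Real.sqrt (degv T Hd v) : ℂ))) := by

  have key : ∀ u v : V, ∀ i j : Fin 1,
      (Matrix.diagonal (fun p : V × Fin 1 => ((Real.sqrt (degv T Hd p.1) : ℂ))⁻¹) *
        Lap T Hd ((1 : ℝ)/4) (fun _ _ => (1 : Matrix (Fin 1) (Fin 1) ℝ)) *
       Matrix.diagonal (fun p : V × Fin 1 => ((Real.sqrt (degv T Hd p.1) : ℂ))⁻¹))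
        (u, i) (v, j) =
      ((Real.sqrt (degv T Hd u) : ℂ))⁻¹ *
        ((if u = v then (degv T Hd u : ℂ) else 0) -
          ∑ e : E, (starRingEnd ℂ) (dirS T Hd ((1:ℝ)/4) e u) *
            ((edeg T Hd e : ℂ))⁻¹ * dirS T Hd ((1:ℝ)/4) e v) *
        ((Real.sqrt (degv T Hd v) : ℂ))⁻¹ := by
    intro u v i j
    rw [Matrix.mul_diagonal, Matrix.diagonal_mul, Lap, Matrix.sub_apply, DVmat_entry,
      quad_entry]
  have hsq : ∀ u : V, ((Real.sqrt (degv T Hd u) : ℂ)) * ((Real.sqrt (degv T Hd u) : ℂ)) =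
      (degv T Hd u : ℂ) := by
    intro u
    rw [← Complex.ofReal_mul, Real.mul_self_sqrt (Nat.cast_nonneg _)]
    norm_num
  have hs0 : ∀ u : V, ((Real.sqrt (degv T Hd u) : ℂ)) ≠ 0 := by
    intro u
    simp only [ne_eq, Complex.ofReal_eq_zero]
    exact ne_of_gt (Real.sqrt_pos.mpr (by exact_mod_cast hcov u))
  constructor
  · intro u i j
    rw [key, if_pos rfl]
    have hsum : ∑ e : E, (starRingEnd ℂ) (dirS T Hd ((1:ℝ)/4) e u) *
        ((edeg T Hd e : ℂ))⁻¹ * dirS T Hd ((1:ℝ)/4) e u =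
        ∑ e ∈ Finset.univ.filter (fun e => u ∈ everts T Hd e), ((edeg T Hd e : ℂ))⁻¹ := by
      rw [Finset.sum_filter]
      exact Finset.sum_congr rfl fun e _ => ptwise_diag T Hd u e
    have h2 : ∑ e ∈ Finset.univ.filter (fun e => u ∈ everts T Hd e),
        ((degv T Hd u : ℂ) * (edeg T Hd e : ℂ))⁻¹ =
        ((degv T Hd u : ℂ))⁻¹ * ∑ e ∈ Finset.univ.filter (fun e => u ∈ everts T Hd e),
          ((edeg T Hd e : ℂ))⁻¹ := by
      rw [Finset.mul_sum]
      exact Finset.sum_congr rfl fun e _ => mul_inv _ _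
    rw [hsum, h2, ← hsq u, scalar_diag _ _ (hs0 u)]
  · intro u v huv i j
    rw [key, if_neg huv]
    have hQ : ∑ e : E, (starRingEnd ℂ) (dirS T Hd ((1:ℝ)/4) e u) *
        ((edeg T Hd e : ℂ))⁻¹ * dirS T Hd ((1:ℝ)/4) e v =
        (∑ e ∈ Finset.univ.filter
            (fun e => (u ∈ Hd e ∧ v ∈ Hd e) ∨ (u ∈ T e ∧ v ∈ T e)),
          ((edeg T Hd e : ℂ))⁻¹)
        + Complex.I * (∑ e ∈ Finset.univ.filter (fun e => u ∈ T e ∧ v ∈ Hd e),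
              ((edeg T Hd e : ℂ))⁻¹)
        - Complex.I * (∑ e ∈ Finset.univ.filter (fun e => u ∈ Hd e ∧ v ∈ T e),
              ((edeg T Hd e : ℂ))⁻¹) := by
      rw [Finset.sum_filter, Finset.sum_filter, Finset.sum_filter, Finset.mul_sum,
        Finset.mul_sum, ← Finset.sum_add_distrib, ← Finset.sum_sub_distrib]
      exact Finset.sum_congr rfl fun e _ => ptwise_off T Hd hdisj u v e
    rw [hQ, scalar_off]
    congr 1
    ring

end
end

section
/- If the hypergraph is 2-uniform (δ_e = 2 for every e ∈ E), then the Duta Sheaf Hypergraph Laplacian equals one half of the Hansen–Ghrist Sheaf Laplacian, 𝓛_F = (1/2)·L_F where (L_F)_{uu} = Σ_{e: u∈e} F_{u⊴e}^⊤ F_{u⊴e} and (L_F)_{uv} = −Σ_{e: u,v∈e} F_{u⊴e}^⊤ F_{v⊴e} for u ≠ v, and consequently 𝓛_F is positive semidefinite. -/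
open Matrix Finset

noncomputable section

variable {V E : Type*} [Fintype V] [DecidableEq V] [Fintype E] [DecidableEq E] {d : ℕ}

/-- The Duta Sheaf Hypergraph Laplacian `𝓛_F ∈ ℝ^{nd×nd}` of an undirected hypergraph with
hyperedges `Ed e ⊆ V`: diagonal blocks `Σ_{e: u∈e} (1/δ_e) F_{u⊴e}ᵀ F_{u⊴e}` and off-diagonal
blocks `−Σ_{e: u,v∈e} (1/δ_e) F_{u⊴e}ᵀ F_{v⊴e}`. -/
def DutaLap (Ed : E → Finset V) (F : V → E → Matrix (Fin d) (Fin d) ℝ) :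
    Matrix (V × Fin d) (V × Fin d) ℝ :=
  Matrix.of fun p r =>
    if p.1 = r.1 then
      ∑ e ∈ Finset.univ.filter (fun e => p.1 ∈ Ed e),
        (((Ed e).card : ℝ))⁻¹ * (((F p.1 e)ᵀ * F p.1 e) p.2 r.2)
    else
      -∑ e ∈ Finset.univ.filter (fun e => p.1 ∈ Ed e ∧ r.1 ∈ Ed e),
        (((Ed e).card : ℝ))⁻¹ * (((F p.1 e)ᵀ * F r.1 e) p.2 r.2)

/-- If the hypergraph is 2-uniform (`δ_e = 2` for every hyperedge), the Duta
Sheaf Hypergraph Laplacian equals one half of the Hansen–Ghrist Sheaf Laplacian `L_F`, with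
`(L_F)_{uu} = Σ_{e: u∈e} F_{u⊴e}ᵀ F_{u⊴e}` and `(L_F)_{uv} = −Σ_{e: u,v∈e} F_{u⊴e}ᵀ F_{v⊴e}` for
`u ≠ v`; consequently `𝓛_F` is positive semidefinite. -/
theorem duta_sheaf_laplacian_two_uniform
    (Ed : E → Finset V) (F : V → E → Matrix (Fin d) (Fin d) ℝ)
    (hd : 0 < d)
    (h2 : ∀ e, (Ed e).card = 2) :
    (DutaLap Ed F = ((1 : ℝ)/2) •
      Matrix.of (fun p r : V × Fin d =>
        if p.1 = r.1 then
          ∑ e ∈ Finset.univ.filter (fun e => p.1 ∈ Ed e),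
            ((F p.1 e)ᵀ * F p.1 e) p.2 r.2
        else
          -∑ e ∈ Finset.univ.filter (fun e => p.1 ∈ Ed e ∧ r.1 ∈ Ed e),
            ((F p.1 e)ᵀ * F r.1 e) p.2 r.2)) ∧
    (DutaLap Ed F).PosSemidef := by
  constructor
  · ext p r
    simp only [DutaLap, of_apply, Matrix.smul_apply, smul_eq_mul]
    split_ifs with h
    · rw [Finset.mul_sum]
      refine Finset.sum_congr rfl fun e _ => ?_
      rw [h2 e]; norm_num
    · rw [mul_neg, Finset.mul_sum, neg_inj]
      refine Finset.sum_congr rfl fun e _ => ?_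
      rw [h2 e]; norm_num
  · letI : LinearOrder V := LinearOrder.lift' (Fintype.equivFin V) (Fintype.equivFin V).injective
    have hne : ∀ e, (Ed e).Nonempty := fun e =>
      Finset.card_pos.mp (by rw [h2 e]; norm_num)
    set sgn : V → E → ℝ := fun u e => if u = (Ed e).min' (hne e) then 1 else -1 with hsgn
    have hs2 : ∀ u e, sgn u e * sgn u e = 1 := by
      intro u e; simp only [hsgn]; split_ifs <;> norm_num
    have hsne : ∀ u v e, u ≠ v → u ∈ Ed e → v ∈ Ed e → sgn u e * sgn v e = -1 := by
      intro u v e huv hu hv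
      have hE : ({u, v} : Finset V) = Ed e := by
        apply Finset.eq_of_subset_of_card_le
        · intro x hx
          rcases Finset.mem_insert.mp hx with h | h
          · exact h ▸ hu
          · exact (Finset.mem_singleton.mp h) ▸ hv
        · rw [h2 e, Finset.card_pair huv]
      have hmin : (Ed e).min' (hne e) ∈ ({u, v} : Finset V) := by
        rw [hE]; exact (Ed e).min'_mem (hne e)
      rcases Finset.mem_insert.mp hmin with h | h
      · have hv' : v ≠ (Ed e).min' (hne e) := by rw [h]; exact huv.symm
        simp only [hsgn, if_pos h.symm, if_neg hv']; norm_num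
      · have h := Finset.mem_singleton.mp h
        have hu' : u ≠ (Ed e).min' (hne e) := by rw [h]; exact huv
        simp only [hsgn, if_pos h.symm, if_neg hu']; norm_num
    set B : Matrix (E × Fin d) (V × Fin d) ℝ := Matrix.of fun q p =>
      if p.1 ∈ Ed q.1 then Real.sqrt 2⁻¹ * sgn p.1 q.1 * F p.1 q.1 q.2 p.2 else 0 with hB
    have key : DutaLap Ed F = Bᴴ * B := by
      ext p r
      rw [Matrix.mul_apply]
      rw [Fintype.sum_prod_type]
      have he : ∀ e : E, ∑ i : Fin d, Bᴴ p (e, i) * B (e, i) r =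
          if p.1 ∈ Ed e ∧ r.1 ∈ Ed e then
            2⁻¹ * (sgn p.1 e * sgn r.1 e) * (((F p.1 e)ᵀ * F r.1 e) p.2 r.2) else 0 := by
        intro e
        by_cases hp : p.1 ∈ Ed e
        · by_cases hr : r.1 ∈ Ed e
          · rw [if_pos ⟨hp, hr⟩, Matrix.mul_apply]
            rw [Finset.mul_sum]
            refine Finset.sum_congr rfl fun i _ => ?_
            simp only [hB, conjTranspose_apply, of_apply, if_pos hp, if_pos hr, star_trivial,
              transpose_apply]
            have : Real.sqrt 2⁻¹ * Real.sqrt 2⁻¹ = 2⁻¹ :=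
              Real.mul_self_sqrt (by norm_num)
            ring_nf
            rw [Real.sq_sqrt (by norm_num : (0:ℝ) ≤ 1/2)]
            ring
          · rw [if_neg (fun hc => hr hc.2)]
            refine Finset.sum_eq_zero fun i _ => ?_
            simp [hB, hr]
        · rw [if_neg (fun hc => hp hc.1)]
          refine Finset.sum_eq_zero fun i _ => ?_
          simp [hB, hp, conjTranspose_apply]
      rw [Finset.sum_congr rfl fun e _ => he e]
      simp only [DutaLap, of_apply]
      split_ifs with h
      · rw [← Finset.sum_filter]
        refine Finset.sum_congr (by simp [h]) fun e hee => ?_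
        have hpe : p.1 ∈ Ed e ∧ r.1 ∈ Ed e := (Finset.mem_filter.mp hee).2
        rw [h2 e, h] at *
        rw [hs2 r.1 e]
        norm_num
      · rw [← Finset.sum_filter, ← Finset.sum_neg_distrib]
        refine Finset.sum_congr rfl fun e hee => ?_
        have hpe : p.1 ∈ Ed e ∧ r.1 ∈ Ed e := (Finset.mem_filter.mp hee).2
        rw [hsne p.1 r.1 e h hpe.1 hpe.2, h2 e]
        norm_num
    rw [key]
    exact Matrix.posSemidef_conjTranspose_mul_self B

end
end
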